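/- arXiv:0805.3370 — 14 statements merged into one kernel-verified Lean document; each statement's English description precedes it below -/
import Mathlib

section
/- Let R be a prime ring which is a maximal subring of a ring S. If S is not a prime ring, then there exists a nonzero two-sided ideal I of S with R ∩ I = {0} (and hence, by maximality, R + I = S, so S = R ⊕ I as additive groups). -/
/-- `R` is a maximal subring of `S`. -/
def IsMaximalSubring {S : Type*} [Ring S] (R : Subring S) : Prop :=
  R ≠ ⊤ ∧ ∀ T : Subring S, R ≤ T → T = R ∨ T = ⊤

/-- A ring `A` is prime if `a A b = 0` implies `a = 0` or `b = 0`. -/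
def IsPrimeRing (A : Type*) [Ring A] : Prop :=
  ∀ a b : A, (∀ x : A, a * x * b = 0) → a = 0 ∨ b = 0

lemma aux_sum {S : Type*} [Ring S] (R : Subring S) (hmax : IsMaximalSubring R)
    (I : TwoSidedIdeal S) (c : S) (hc : c ∈ I) (hc0 : c ≠ 0)
    (hRI : ∀ x : S, x ∈ R → x ∈ I → x = 0) :
    ∃ I : TwoSidedIdeal S, I ≠ ⊥ ∧ (∀ x : S, x ∈ R → x ∈ I → x = 0) ∧
      ∀ s : S, ∃ r ∈ R, ∃ i ∈ I, s = r + i := by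
  refine ⟨I, ?_, hRI, ?_⟩
  · intro h
    rw [h] at hc
    exact hc0 (by simpa using hc)
  · set T : Subring S :=
      { carrier := {s | ∃ r ∈ R, ∃ i ∈ I, s = r + i}
        one_mem' := ⟨1, R.one_mem, 0, I.zero_mem, by abel⟩
        zero_mem' := ⟨0, R.zero_mem, 0, I.zero_mem, by abel⟩
        add_mem' := by
          rintro x y ⟨r, hr, i, hi, rfl⟩ ⟨r', hr', i', hi', rfl⟩
          exact ⟨r + r', R.add_mem hr hr', i + i', I.add_mem hi hi', by abel⟩
        neg_mem' := by
          rintro x ⟨r, hr, i, hi, rfl⟩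
          exact ⟨-r, R.neg_mem hr, -i, I.neg_mem hi, by abel⟩
        mul_mem' := by
          rintro x y ⟨r, hr, i, hi, rfl⟩ ⟨r', hr', i', hi', rfl⟩
          refine ⟨r * r', R.mul_mem hr hr', r * i' + i * r' + i * i',
            I.add_mem (I.add_mem (I.mul_mem_left _ _ hi') (I.mul_mem_right _ _ hi))
              (I.mul_mem_left _ _ hi'), by rw [add_mul, mul_add, mul_add]; abel⟩ } with hT
    have hle : R ≤ T := fun r hr => ⟨r, hr, 0, I.zero_mem, by abel⟩
    rcases hmax.2 T hle with h | h
    · exfalso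
      have hcT : c ∈ T := ⟨0, R.zero_mem, c, hc, by abel⟩
      rw [h] at hcT
      exact hc0 (hRI c hcT hc)
    · intro s
      have : s ∈ T := h ▸ Subring.mem_top s
      exact this

/-- If a prime ring `R` is a maximal subring of `S` and `S` is not
prime, then there is a nonzero two-sided ideal `I` of `S` with `R ∩ I = {0}`, and
(by maximality) `R + I = S`, the sum being direct. -/
theorem stmt1 {S : Type*} [Ring S] (R : Subring S) (hmax : IsMaximalSubring R)
    (hRprime : ∀ a b : S, a ∈ R → b ∈ R → (∀ x ∈ R, a * x * b = 0) → a = 0 ∨ b = 0)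
    (hSnotprime : ¬ IsPrimeRing S) :
    ∃ I : TwoSidedIdeal S, I ≠ ⊥ ∧ (∀ x : S, x ∈ R → x ∈ I → x = 0) ∧
      ∀ s : S, ∃ r ∈ R, ∃ i ∈ I, s = r + i := by
  rw [IsPrimeRing] at hSnotprime
  push_neg at hSnotprime
  obtain ⟨a, b, hab, ha0, hb0⟩ := hSnotprime
  -- I₂ : annihilator-type ideal containing b
  set I₂ : TwoSidedIdeal S := TwoSidedIdeal.mk' {x | ∀ s : S, a * s * x = 0}
    (by intro s; simp)
    (by intro x y hx hy s; rw [mul_add, hx s, hy s, add_zero])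
    (by intro x hx s; rw [mul_neg, hx s, neg_zero])
    (by intro x y hy s
        show a * s * (x * y) = 0
        calc a * s * (x * y) = a * (s * x) * y := by noncomm_ring
        _ = 0 := hy _)
    (by intro x y hx s
        show a * s * (x * y) = 0
        calc a * s * (x * y) = (a * s * x) * y := by noncomm_ring
        _ = 0 := by rw [hx s, zero_mul]) with hI₂
  have hbI₂ : b ∈ I₂ := by
    rw [hI₂, TwoSidedIdeal.mem_mk']
    intro s; exact hab s
  -- I₁ : left annihilator of I₂, contains a
  set I₁ : TwoSidedIdeal S := TwoSidedIdeal.mk'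
    {x | ∀ s y : S, (∀ t : S, a * t * y = 0) → x * s * y = 0}
    (by intro s y _; simp)
    (by intro x x' hx hx' s y hy; rw [add_mul, add_mul, hx s y hy, hx' s y hy, add_zero])
    (by intro x hx s y hy; rw [neg_mul, neg_mul, hx s y hy, neg_zero])
    (by intro x y hy s z hz
        show x * y * s * z = 0
        calc x * y * s * z = x * (y * s * z) := by noncomm_ring
        _ = 0 := by rw [hy s z hz, mul_zero])
    (by intro x y hx s z hz
        show x * y * s * z = 0
        calc x * y * s * z = x * (y * s) * z := by noncomm_ring
        _ = 0 := hx _ z hz) with hI₁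
  have haI₁ : a ∈ I₁ := by
    rw [hI₁, TwoSidedIdeal.mem_mk']
    intro s y hy; exact hy s
  -- key: elements of I₁ annihilate I₂ through S
  have key : ∀ u v : S, u ∈ I₁ → v ∈ I₂ → ∀ r : S, u * r * v = 0 := by
    intro u v hu hv r
    rw [hI₁, TwoSidedIdeal.mem_mk'] at hu
    rw [hI₂, TwoSidedIdeal.mem_mk'] at hv
    exact hu r v hv
  by_cases h : ∀ x : S, x ∈ R → x ∈ I₂ → x = 0
  · exact aux_sum R hmax I₂ b hbI₂ hb0 h
  · push_neg at h
    obtain ⟨c, hcR, hcI₂, hc0⟩ := h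
    refine aux_sum R hmax I₁ a haI₁ ha0 ?_
    intro x hxR hxI₁
    rcases hRprime x c hxR hcR (fun r _ => key x c hxI₁ hcI₂ r) with h | h
    · exact h
    · exact absurd h hc0
end

section
/- Let S be a ring, R a maximal subring of S, and I a nonzero two-sided ideal of S with R ∩ I = {0}. If I·I ≠ 0, then the nonunital ring I is simple: the only additive subgroups J of I satisfying I·J ⊆ J and J·I ⊆ J are {0} and I. Moreover {x ∈ I : I·x = 0} = {0} and {x ∈ I : x·I = 0} = {0}. -/
/-- If `R` is a maximal subring of `S` and `I` is a nonzero two-sided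
ideal of `S` with `R ∩ I = {0}` and `I·I ≠ 0`, then the nonunital ring `I` is simple:
its only rng-ideals are `{0}` and `I`, and its left and right annihilators in itself
vanish. -/
theorem stmt3 {S : Type*} [Ring S] (R : Subring S) (hmax : IsMaximalSubring R)
    (I : TwoSidedIdeal S) (hI : I ≠ ⊥)
    (hRI : ∀ x : S, x ∈ R → x ∈ I → x = 0)
    (hIsq : ∃ x ∈ I, ∃ y ∈ I, x * y ≠ 0) :
    (∀ J : AddSubgroup S, (J : Set S) ⊆ (I : Set S) →
      (∀ x ∈ I, ∀ j ∈ J, x * j ∈ J) → (∀ x ∈ I, ∀ j ∈ J, j * x ∈ J) →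
      J = ⊥ ∨ (J : Set S) = (I : Set S)) ∧
    (∀ x ∈ I, (∀ y ∈ I, y * x = 0) → x = 0) ∧
    (∀ x ∈ I, (∀ y ∈ I, x * y = 0) → x = 0) := by
  -- Key lemma: any "two-sided ideal of S" set K contained in I is 0 or all of I.
  have key : ∀ K : Set S, K ⊆ (I : Set S) → (0 : S) ∈ K →
      (∀ a b : S, a ∈ K → b ∈ K → a + b ∈ K) →
      (∀ s x : S, x ∈ K → s * x ∈ K) →
      (∀ s x : S, x ∈ K → x * s ∈ K) →
      (∀ x ∈ K, x = 0) ∨ K = (I : Set S) := by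
    intro K hKI h0 hadd hml hmr
    set T : Subring S :=
      { carrier := {s : S | ∃ r ∈ R, s - r ∈ K}
        one_mem' := ⟨1, R.one_mem, by simpa using h0⟩
        zero_mem' := ⟨0, R.zero_mem, by simpa using h0⟩
        add_mem' := by
          rintro s t ⟨r, hr, hsr⟩ ⟨r', hr', htr'⟩
          exact ⟨r + r', R.add_mem hr hr', by
            have := hadd _ _ hsr htr'
            convert this using 1; noncomm_ring⟩
        neg_mem' := by
          rintro s ⟨r, hr, hsr⟩
          exact ⟨-r, R.neg_mem hr, by
            have := hml (-1) _ hsr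
            convert this using 1; noncomm_ring⟩
        mul_mem' := by
          rintro s t ⟨r, hr, hsr⟩ ⟨r', hr', htr'⟩
          refine ⟨r * r', R.mul_mem hr hr', ?_⟩
          have h1 : (s - r) * t ∈ K := hmr t _ hsr
          have h2 : r * (t - r') ∈ K := hml r _ htr'
          have := hadd _ _ h1 h2
          convert this using 1; noncomm_ring } with hT
    have hRT : R ≤ T := fun r hr => ⟨r, hr, by simpa using h0⟩
    rcases hmax.2 T hRT with h | h
    · left
      intro x hx
      have hxT : x ∈ T := ⟨0, R.zero_mem, by simpa using hx⟩
      have hxR : x ∈ R := by rw [← h]; exact hxT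
      exact hRI x hxR (hKI hx)
    · right
      refine Set.Subset.antisymm hKI ?_
      intro a ha
      have haT : a ∈ T := by rw [h]; trivial
      obtain ⟨r, hr, har⟩ := haT
      have harI : a - r ∈ I := hKI har
      have hrI : r ∈ I := by
        have : a - (a - r) ∈ I := I.sub_mem ha harI
        simpa using this
      have hr0 : r = 0 := hRI r hr hrI
      rw [hr0] at har
      simpa using har
  -- left annihilator vanishes
  have hL : ∀ x ∈ I, (∀ y ∈ I, y * x = 0) → x = 0 := by
    have := key {x : S | x ∈ I ∧ ∀ y ∈ I, y * x = 0}
      (fun x hx => hx.1) ⟨I.zero_mem, fun y _ => by simp⟩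
      (fun a b ha hb => ⟨I.add_mem ha.1 hb.1, fun y hy => by
        rw [mul_add, ha.2 y hy, hb.2 y hy, add_zero]⟩)
      (fun s x hx => ⟨I.mul_mem_left s x hx.1, fun y hy => by
        rw [← mul_assoc]; exact hx.2 (y * s) (I.mul_mem_right y s hy)⟩)
      (fun s x hx => ⟨I.mul_mem_right x s hx.1, fun y hy => by
        rw [← mul_assoc]
        have : y * x = 0 := hx.2 y hy
        rw [this, zero_mul]⟩)
    rcases this with h | h
    · intro x hx hann; exact h x ⟨hx, hann⟩
    · exfalso
      obtain ⟨x, hx, y, hy, hxy⟩ := hIsq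
      have : y ∈ {x : S | x ∈ I ∧ ∀ y ∈ I, y * x = 0} := h ▸ hy
      exact hxy (this.2 x hx)
  -- right annihilator vanishes
  have hA : ∀ x ∈ I, (∀ y ∈ I, x * y = 0) → x = 0 := by
    have := key {x : S | x ∈ I ∧ ∀ y ∈ I, x * y = 0}
      (fun x hx => hx.1) ⟨I.zero_mem, fun y _ => by simp⟩
      (fun a b ha hb => ⟨I.add_mem ha.1 hb.1, fun y hy => by
        rw [add_mul, ha.2 y hy, hb.2 y hy, add_zero]⟩)
      (fun s x hx => ⟨I.mul_mem_left s x hx.1, fun y hy => by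
        rw [mul_assoc, hx.2 y hy, mul_zero]⟩)
      (fun s x hx => ⟨I.mul_mem_right x s hx.1, fun y hy => by
        rw [mul_assoc]; exact hx.2 (s * y) (I.mul_mem_left s y hy)⟩)
    rcases this with h | h
    · intro x hx hann; exact h x ⟨hx, hann⟩
    · exfalso
      obtain ⟨x, hx, y, hy, hxy⟩ := hIsq
      have : x ∈ {x : S | x ∈ I ∧ ∀ y ∈ I, x * y = 0} := h ▸ hx
      exact hxy (this.2 y hy)
  refine ⟨?_, hL, hA⟩
  intro J hJI hml hmr
  -- the S-ideal core of J
  set K : Set S := {x : S | x ∈ J ∧ (∀ s : S, s * x ∈ J) ∧ (∀ s : S, x * s ∈ J)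
      ∧ (∀ s t : S, s * x * t ∈ J)} with hK
  have hKJ : K ⊆ (J : Set S) := fun x hx => hx.1
  have hcore := key K (fun x hx => hJI hx.1)
    ⟨J.zero_mem, fun s => by simpa using J.zero_mem,
      fun s => by simpa using J.zero_mem, fun s t => by simpa using J.zero_mem⟩
    (fun a b ha hb => ⟨J.add_mem ha.1 hb.1,
      fun s => by rw [mul_add]; exact J.add_mem (ha.2.1 s) (hb.2.1 s),
      fun s => by rw [add_mul]; exact J.add_mem (ha.2.2.1 s) (hb.2.2.1 s),
      fun s t => by rw [mul_add, add_mul]; exact J.add_mem (ha.2.2.2 s t) (hb.2.2.2 s t)⟩)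
    (fun s x hx => ⟨hx.2.1 s,
      fun t => by rw [← mul_assoc]; exact hx.2.1 (t * s),
      fun t => hx.2.2.2 s t,
      fun t u => by rw [← mul_assoc]; exact hx.2.2.2 (t * s) u⟩)
    (fun s x hx => ⟨hx.2.2.1 s,
      fun t => by rw [← mul_assoc]; exact hx.2.2.2 t s,
      fun t => by rw [mul_assoc]; exact hx.2.2.1 (s * t),
      fun t u => by
        have := hx.2.2.2 t (s * u)
        simpa only [mul_assoc] using this⟩)
  -- products a*j*b with a,b ∈ I, j ∈ J lie in K
  have hprod : ∀ a ∈ I, ∀ b ∈ I, ∀ j ∈ J, a * j * b ∈ K := by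
    intro a ha b hb j hj
    refine ⟨hmr b hb _ (hml a ha j hj), ?_, ?_, ?_⟩
    · intro s
      have h1 : (s * a) * j ∈ J := hml _ (I.mul_mem_left s a ha) j hj
      have h2 : ((s * a) * j) * b ∈ J := hmr b hb _ h1
      simpa only [mul_assoc] using h2
    · intro s
      have h1 : a * j ∈ J := hml a ha j hj
      have h2 : (a * j) * (b * s) ∈ J := hmr _ (I.mul_mem_right b s hb) _ h1
      simpa only [mul_assoc] using h2
    · intro s t
      have h1 : (s * a) * j ∈ J := hml _ (I.mul_mem_left s a ha) j hj
      have h2 : ((s * a) * j) * (b * t) ∈ J := hmr _ (I.mul_mem_right b t hb) _ h1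
      simpa only [mul_assoc] using h2
  rcases hcore with h | h
  · left
    rw [AddSubgroup.eq_bot_iff_forall]
    intro j hj
    -- for each a ∈ I, a * j annihilates I on the right, hence a * j = 0
    have haj : ∀ a ∈ I, a * j = 0 := by
      intro a ha
      refine hA (a * j) (I.mul_mem_left a j (hJI hj)) ?_
      intro b hb
      exact h _ (hprod a ha b hb j hj)
    exact hL j (hJI hj) haj
  · right
    refine Set.Subset.antisymm hJI ?_
    intro x hx
    exact hKJ (h ▸ hx)
end

section
/- Let S be a ring, R a maximal subring of S, and I a nonzero two-sided ideal of S with R ∩ I = {0}. Then the right annihilator {x ∈ R : Ix = 0} and the left annihilator {x ∈ R : xI = 0} are prime two-sided ideals of R, and ann_R(I) = {x ∈ R : xI = Ix = 0} is a semiprime two-sided ideal of R. If moreover I·I ≠ 0, then these three ideals coincide, and in particular ann_R(I) is a prime ideal of R. -/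
/-- A two-sided ideal `P` of a ring `A` is prime: `P ≠ A` and for all two-sided ideals
`B`, `C`, `BC ⊆ P` implies `B ⊆ P` or `C ⊆ P`. -/
def IsPrimeTwoSidedIdeal {A : Type*} [Ring A] (P : TwoSidedIdeal A) : Prop :=
  P ≠ ⊤ ∧ ∀ B C : TwoSidedIdeal A, (∀ x ∈ B, ∀ y ∈ C, x * y ∈ P) → B ≤ P ∨ C ≤ P

/-- A two-sided ideal `P` of a ring `A` is semiprime: `B² ⊆ P` implies `B ⊆ P` for every
two-sided ideal `B`. -/
def IsSemiprimeTwoSidedIdeal {A : Type*} [Ring A] (P : TwoSidedIdeal A) : Prop :=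
  ∀ B : TwoSidedIdeal A, (∀ x ∈ B, ∀ y ∈ B, x * y ∈ P) → B ≤ P

/-- Key dichotomy: if `M ⊆ I` is an additive subgroup closed under multiplication by `R`
on both sides and under internal multiplication, then `R + M` is a subring between `R`
and `S`, so by maximality `M = 0` or `M = I`. -/
lemma key_dichotomy {S : Type*} [Ring S] (R : Subring S) (hmax : IsMaximalSubring R)
    (I : TwoSidedIdeal S)
    (hRI : ∀ x : S, x ∈ R → x ∈ I → x = 0)
    (M : Set S) (hMI : ∀ m ∈ M, m ∈ I) (h0 : (0 : S) ∈ M)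
    (hadd : ∀ m ∈ M, ∀ m' ∈ M, m + m' ∈ M)
    (hneg : ∀ m ∈ M, -m ∈ M)
    (hrm : ∀ r ∈ R, ∀ m ∈ M, r * m ∈ M)
    (hmr : ∀ m ∈ M, ∀ r ∈ R, m * r ∈ M)
    (hmm : ∀ m ∈ M, ∀ m' ∈ M, m * m' ∈ M) :
    (∀ m ∈ M, m = 0) ∨ (∀ i ∈ I, i ∈ M) := by
  set T : Subring S :=
    { carrier := {s | ∃ r ∈ R, ∃ m ∈ M, s = r + m}
      one_mem' := ⟨1, R.one_mem, 0, h0, by abel⟩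
      zero_mem' := ⟨0, R.zero_mem, 0, h0, by abel⟩
      add_mem' := by
        rintro a b ⟨r, hr, m, hm, rfl⟩ ⟨r', hr', m', hm', rfl⟩
        exact ⟨r + r', R.add_mem hr hr', m + m', hadd m hm m' hm', by abel⟩
      neg_mem' := by
        rintro a ⟨r, hr, m, hm, rfl⟩
        exact ⟨-r, R.neg_mem hr, -m, hneg m hm, by abel⟩
      mul_mem' := by
        rintro a b ⟨r, hr, m, hm, rfl⟩ ⟨r', hr', m', hm', rfl⟩
        refine ⟨r * r', R.mul_mem hr hr',
          r * m' + m * r' + m * m', ?_, by noncomm_ring⟩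
        exact hadd _ (hadd _ (hrm r hr m' hm') _ (hmr m hm r' hr')) _ (hmm m hm m' hm') }
  have hRT : R ≤ T := fun r hr => ⟨r, hr, 0, h0, by abel⟩
  rcases hmax.2 T hRT with hT | hT
  · left
    intro m hm
    have hmT : m ∈ T := ⟨0, R.zero_mem, m, hm, by abel⟩
    rw [hT] at hmT
    exact hRI m hmT (hMI m hm)
  · right
    intro i hi
    have hiT : i ∈ T := by rw [hT]; trivial
    obtain ⟨r, hr, m, hm, heq⟩ := hiT
    have hrI : r ∈ I := by
      have : r = i - m := by rw [heq]; abel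
      rw [this]
      exact I.sub_mem hi (hMI m hm)
    have hr0 : r = 0 := hRI r hr hrI
    have : i = m := by rw [heq, hr0, zero_add]
    rwa [this]

/-- Let `R` be a maximal subring of `S` and `I` a nonzero two-sided
ideal of `S` with `R ∩ I = {0}`.  Then the right annihilator `{x ∈ R : Ix = 0}` and the
left annihilator `{x ∈ R : xI = 0}` are prime two-sided ideals of `R`, and
`ann_R(I) = {x ∈ R : xI = Ix = 0}` is a semiprime two-sided ideal of `R`.  If moreover
`I·I ≠ 0`, the three coincide and `ann_R(I)` is prime. -/
theorem stmt4 {S : Type*} [Ring S] (R : Subring S) (hmax : IsMaximalSubring R)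
    (I : TwoSidedIdeal S) (hI : I ≠ ⊥)
    (hRI : ∀ x : S, x ∈ R → x ∈ I → x = 0)
    (Pr Pl Pa : TwoSidedIdeal R)
    (hPr : ∀ x : R, x ∈ Pr ↔ ∀ i ∈ I, i * (x : S) = 0)
    (hPl : ∀ x : R, x ∈ Pl ↔ ∀ i ∈ I, (x : S) * i = 0)
    (hPa : ∀ x : R, x ∈ Pa ↔ ∀ i ∈ I, (x : S) * i = 0 ∧ i * (x : S) = 0) :
    IsPrimeTwoSidedIdeal Pr ∧ IsPrimeTwoSidedIdeal Pl ∧ IsSemiprimeTwoSidedIdeal Pa ∧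
    ((∃ x ∈ I, ∃ y ∈ I, x * y ≠ 0) →
      Pr = Pa ∧ Pl = Pa ∧ IsPrimeTwoSidedIdeal Pa) := by
  -- Pr ≠ ⊤
  have hPrTop : Pr ≠ ⊤ := by
    intro h
    apply hI
    refine eq_bot_iff.2 fun i hi => ?_
    rw [TwoSidedIdeal.mem_bot]
    have h1 : (1 : R) ∈ Pr := h ▸ TwoSidedIdeal.mem_top _
    have := (hPr 1).1 h1 i hi
    simpa using this
  have hPlTop : Pl ≠ ⊤ := by
    intro h
    apply hI
    refine eq_bot_iff.2 fun i hi => ?_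
    rw [TwoSidedIdeal.mem_bot]
    have h1 : (1 : R) ∈ Pl := h ▸ TwoSidedIdeal.mem_top _
    have := (hPl 1).1 h1 i hi
    simpa using this
  -- Pr is prime
  have hPrPrime : IsPrimeTwoSidedIdeal Pr := by
    refine ⟨hPrTop, fun B C h => ?_⟩
    set M : Set S := {i | i ∈ I ∧ ∀ c : R, c ∈ C → i * (c : S) = 0} with hM
    have key := key_dichotomy R hmax I hRI M
      (fun m hm => hm.1)
      ⟨I.zero_mem, fun c _ => by rw [zero_mul]⟩
      (fun m hm m' hm' => ⟨I.add_mem hm.1 hm'.1,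
        fun c hc => by rw [add_mul, hm.2 c hc, hm'.2 c hc, add_zero]⟩)
      (fun m hm => ⟨I.neg_mem hm.1, fun c hc => by rw [neg_mul, hm.2 c hc, neg_zero]⟩)
      (fun r hr m hm => ⟨I.mul_mem_left r m hm.1,
        fun c hc => by rw [mul_assoc, hm.2 c hc, mul_zero]⟩)
      (fun m hm r hr => ⟨I.mul_mem_right m r hm.1,
        fun c hc => by
          have : m * r * (c : S) = m * ((⟨r, hr⟩ * c : R) : S) := by
            push_cast; rw [mul_assoc]
          rw [this, hm.2 _ (C.mul_mem_left _ _ hc)]⟩)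
      (fun m hm m' hm' => ⟨I.mul_mem_right m m' hm.1,
        fun c hc => by rw [mul_assoc, hm'.2 c hc, mul_zero]⟩)
    rcases key with hz | hall
    · left
      intro b hb
      rw [hPr]
      intro i hi
      refine hz (i * (b : S)) ⟨I.mul_mem_right i _ hi, fun c hc => ?_⟩
      have := (hPr (b * c)).1 (h b hb c hc) i hi
      rw [mul_assoc]
      push_cast at this ⊢
      rw [← mul_assoc]
      rw [← mul_assoc] at this
      exact this
    · right
      intro c hc
      rw [hPr]
      intro i hi
      exact (hall i hi).2 c hc
  -- Pl is prime
  have hPlPrime : IsPrimeTwoSidedIdeal Pl := by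
    refine ⟨hPlTop, fun B C h => ?_⟩
    set M : Set S := {i | i ∈ I ∧ ∀ b : R, b ∈ B → (b : S) * i = 0} with hM
    have key := key_dichotomy R hmax I hRI M
      (fun m hm => hm.1)
      ⟨I.zero_mem, fun b _ => by rw [mul_zero]⟩
      (fun m hm m' hm' => ⟨I.add_mem hm.1 hm'.1,
        fun b hb => by rw [mul_add, hm.2 b hb, hm'.2 b hb, add_zero]⟩)
      (fun m hm => ⟨I.neg_mem hm.1, fun b hb => by rw [mul_neg, hm.2 b hb, neg_zero]⟩)
      (fun r hr m hm => ⟨I.mul_mem_left r m hm.1,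
        fun b hb => by
          have : (b : S) * (r * m) = ((b * ⟨r, hr⟩ : R) : S) * m := by
            push_cast; rw [mul_assoc]
          rw [this, hm.2 _ (B.mul_mem_right _ _ hb)]⟩)
      (fun m hm r hr => ⟨I.mul_mem_right m r hm.1,
        fun b hb => by rw [← mul_assoc, hm.2 b hb, zero_mul]⟩)
      (fun m hm m' hm' => ⟨I.mul_mem_right m m' hm.1,
        fun b hb => by rw [← mul_assoc, hm.2 b hb, zero_mul]⟩)
    rcases key with hz | hall
    · right
      intro c hc
      rw [hPl]
      intro i hi
      refine hz ((c : S) * i) ⟨I.mul_mem_left _ i hi, fun b hb => ?_⟩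
      have := (hPl (b * c)).1 (h b hb c hc) i hi
      push_cast at this
      rw [← mul_assoc]
      exact this
    · left
      intro b hb
      rw [hPl]
      intro i hi
      exact (hall i hi).2 b hb
  -- Pa is semiprime
  have hPaSemi : IsSemiprimeTwoSidedIdeal Pa := by
    intro B hB
    have hBPr : B ≤ Pr := by
      rcases hPrPrime.2 B B (fun x hx y hy => by
        rw [hPr]
        intro i hi
        exact ((hPa (x * y)).1 (hB x hx y hy) i hi).2) with h | h <;> exact h
    have hBPl : B ≤ Pl := by
      rcases hPlPrime.2 B B (fun x hx y hy => by
        rw [hPl]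
        intro i hi
        exact ((hPa (x * y)).1 (hB x hx y hy) i hi).1) with h | h <;> exact h
    intro x hx
    rw [hPa]
    intro i hi
    exact ⟨(hPl x).1 (hBPl hx) i hi, (hPr x).1 (hBPr hx) i hi⟩
  refine ⟨hPrPrime, hPlPrime, hPaSemi, fun h2 => ?_⟩
  -- left annihilator of I inside I is zero
  obtain ⟨x0, hx0, y0, hy0, hxy0⟩ := h2
  have hM1 : ∀ m : S, m ∈ I → (∀ j ∈ I, m * j = 0) → m = 0 := by
    have key := key_dichotomy R hmax I hRI {i | i ∈ I ∧ ∀ j ∈ I, i * j = 0}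
      (fun m hm => hm.1)
      ⟨I.zero_mem, fun j _ => by rw [zero_mul]⟩
      (fun m hm m' hm' => ⟨I.add_mem hm.1 hm'.1,
        fun j hj => by rw [add_mul, hm.2 j hj, hm'.2 j hj, add_zero]⟩)
      (fun m hm => ⟨I.neg_mem hm.1, fun j hj => by rw [neg_mul, hm.2 j hj, neg_zero]⟩)
      (fun r hr m hm => ⟨I.mul_mem_left r m hm.1,
        fun j hj => by rw [mul_assoc, hm.2 j hj, mul_zero]⟩)
      (fun m hm r hr => ⟨I.mul_mem_right m r hm.1,
        fun j hj => by rw [mul_assoc]; exact hm.2 _ (I.mul_mem_left r j hj)⟩)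
      (fun m hm m' hm' => ⟨I.mul_mem_right m m' hm.1,
        fun j hj => by rw [mul_assoc, hm'.2 j hj, mul_zero]⟩)
    rcases key with hz | hall
    · exact fun m hm hmj => hz m ⟨hm, hmj⟩
    · exact absurd ((hall x0 hx0).2 y0 hy0) hxy0
  -- right annihilator of I inside I is zero
  have hM2 : ∀ m : S, m ∈ I → (∀ j ∈ I, j * m = 0) → m = 0 := by
    have key := key_dichotomy R hmax I hRI {i | i ∈ I ∧ ∀ j ∈ I, j * i = 0}
      (fun m hm => hm.1)
      ⟨I.zero_mem, fun j _ => by rw [mul_zero]⟩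
      (fun m hm m' hm' => ⟨I.add_mem hm.1 hm'.1,
        fun j hj => by rw [mul_add, hm.2 j hj, hm'.2 j hj, add_zero]⟩)
      (fun m hm => ⟨I.neg_mem hm.1, fun j hj => by rw [mul_neg, hm.2 j hj, neg_zero]⟩)
      (fun r hr m hm => ⟨I.mul_mem_left r m hm.1,
        fun j hj => by rw [← mul_assoc]; exact hm.2 _ (I.mul_mem_right j r hj)⟩)
      (fun m hm r hr => ⟨I.mul_mem_right m r hm.1,
        fun j hj => by rw [← mul_assoc, hm.2 j hj, zero_mul]⟩)
      (fun m hm m' hm' => ⟨I.mul_mem_right m m' hm.1,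
        fun j hj => by rw [← mul_assoc, hm.2 j hj, zero_mul]⟩)
    rcases key with hz | hall
    · exact fun m hm hmj => hz m ⟨hm, hmj⟩
    · exact absurd ((hall y0 hy0).2 x0 hx0) hxy0
  -- Pl ≤ Pr and Pr ≤ Pl
  have hPlPr : Pl ≤ Pr := by
    intro x hx
    rw [hPr]
    intro i hi
    refine hM1 (i * (x : S)) (I.mul_mem_right i _ hi) fun j hj => ?_
    rw [mul_assoc, (hPl x).1 hx j hj, mul_zero]
  have hPrPl : Pr ≤ Pl := by
    intro x hx
    rw [hPl]
    intro i hi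
    refine hM2 ((x : S) * i) (I.mul_mem_left _ i hi) fun j hj => ?_
    rw [← mul_assoc, (hPr x).1 hx j hj, zero_mul]
  have hPrPa : Pr = Pa := by
    refine le_antisymm (fun x hx => ?_) (fun x hx => ?_)
    · rw [hPa]
      intro i hi
      exact ⟨(hPl x).1 (hPrPl hx) i hi, (hPr x).1 hx i hi⟩
    · rw [hPr]
      intro i hi
      exact ((hPa x).1 hx i hi).2
  have hPlPa : Pl = Pa := by
    refine le_antisymm (fun x hx => ?_) (fun x hx => ?_)
    · rw [hPa]
      intro i hi
      exact ⟨(hPl x).1 hx i hi, (hPr x).1 (hPlPr hx) i hi⟩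
    · rw [hPl]
      intro i hi
      exact ((hPa x).1 hx i hi).1
  exact ⟨hPrPa, hPlPa, hPrPa ▸ hPrPrime⟩
end

section
/- Let S be a ring, R a subring of S, and I a two-sided ideal of S with R ∩ I = {0} and R + I = S. For every R-homomorphism φ : I → R, the set I_φ = {φ(i) − i : i ∈ I} is a two-sided ideal of S satisfying R ∩ I_φ = {0} and R + I_φ = S. Conversely, if I′ is a two-sided ideal of S with R ∩ I′ = {0} and R + I′ = S, then there exists a unique R-homomorphism φ : I → R such that I′ = I_φ. -/
/-!
An ideal `J` with `R ∩ J = 0` and `R + J = S` is the same thing as the kernel of a ring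
retraction `p : S → R` (a ring homomorphism restricting to the identity on `R`): the projection
along `J` is such a retraction. Given `φ : I → R`, the map `r + i ↦ r + φ i` is a retraction
with kernel `I_φ`; conversely the projection along `I'` restricts to the unique `φ` with
`I' = I_φ`, since `φ i - i ∈ I'` forces `φ i` to be the `R`-component of `i`.
-/

/-- An `R`-homomorphism `φ : I → R`, encoded by a function `f : S → S` whose values on
`I` lie in `R` and which is additive, `R`-bilinear and multiplicative on `I` (all
products taken in `S`).  The behavior of `f` outside `I` is irrelevant. -/
def IsRHomToR {S : Type*} [Ring S] (R : Subring S) (I : TwoSidedIdeal S)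
    (f : S → S) : Prop :=
  (∀ i ∈ I, f i ∈ R) ∧
  (∀ i ∈ I, ∀ j ∈ I, f (i + j) = f i + f j) ∧
  (∀ r ∈ R, ∀ i ∈ I, f (r * i) = r * f i) ∧
  (∀ r ∈ R, ∀ i ∈ I, f (i * r) = f i * r) ∧
  (∀ i ∈ I, ∀ j ∈ I, f (i * j) = f i * f j)

structure IsIdealComplement {S : Type*} [Ring S] (R : Subring S) (J : TwoSidedIdeal S) :
    Prop where
  eq_zero_of_mem : ∀ x ∈ R, x ∈ J → x = 0
  exists_add : ∀ s : S, ∃ r ∈ R, ∃ j ∈ J, s = r + j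

theorem IsRHomToR.map_zero {S : Type*} [Ring S] {R : Subring S} {I : TwoSidedIdeal S}
    {f : S → S} (hf : IsRHomToR R I f) : f 0 = 0 := by
  have h := hf.2.1 0 I.zero_mem 0 I.zero_mem
  rwa [add_zero, left_eq_add] at h

section Retraction

variable {S : Type*} [Ring S] {R : Subring S}

theorem isRHomToR_of_retraction (I : TwoSidedIdeal S) (p : S →+* R)
    (hp : ∀ r : R, p r = r) : IsRHomToR R I (fun s => (p s : S)) := by
  have hpR (r : S) (hr : r ∈ R) : (p r : S) = r := congrArg Subtype.val (hp ⟨r, hr⟩)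
  exact ⟨fun i _ => (p i).2, fun i _ j _ => by simp, fun r hr i _ => by simp [hpR r hr],
    fun r hr i _ => by simp [hpR r hr], fun i _ j _ => by simp⟩

theorem isIdealComplement_ker (p : S →+* R) (hp : ∀ r : R, p r = r) :
    IsIdealComplement R (TwoSidedIdeal.ker p) := by
  refine ⟨fun x hx hker => ?_, fun s => ⟨p s, (p s).2, s - p s, ?_, by abel⟩⟩
  · rw [TwoSidedIdeal.mem_ker] at hker
    simpa [hker] using (congrArg Subtype.val (hp ⟨x, hx⟩)).symm
  · rw [TwoSidedIdeal.mem_ker, map_sub, hp, sub_self]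

theorem mem_ker_iff_exists_sub {I : TwoSidedIdeal S} (hsum : ∀ s : S, ∃ r ∈ R, ∃ i ∈ I, s = r + i)
    (p : S →+* R) (hp : ∀ r : R, p r = r) (x : S) :
    x ∈ TwoSidedIdeal.ker p ↔ ∃ i ∈ I, x = p i - i := by
  rw [TwoSidedIdeal.mem_ker]
  constructor
  · intro hx
    obtain ⟨r, hr, i, hi, rfl⟩ := hsum x
    have hr' : r = -(p i : S) := by
      have := congrArg Subtype.val hx
      rw [map_add, hp ⟨r, hr⟩] at this
      exact eq_neg_of_add_eq_zero_left this
    exact ⟨-i, I.neg_mem hi, by simp [hr']⟩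
  · rintro ⟨i, -, rfl⟩
    rw [map_sub, hp, sub_self]

end Retraction

namespace IsIdealComplement

variable {S : Type*} [Ring S] {R : Subring S} {J : TwoSidedIdeal S}

noncomputable def component (h : IsIdealComplement R J) (s : S) : R :=
  ⟨(h.exists_add s).choose, (h.exists_add s).choose_spec.1⟩

theorem sub_component_mem (h : IsIdealComplement R J) (s : S) : s - h.component s ∈ J := by
  obtain ⟨-, j, hj, hs⟩ := (h.exists_add s).choose_spec
  have hsub : s - (h.exists_add s).choose = j := sub_eq_iff_eq_add'.mpr hs
  exact hsub ▸ hj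

theorem component_eq_of_sub_mem (h : IsIdealComplement R J) {s r : S} (hr : r ∈ R)
    (hs : s - r ∈ J) : (h.component s : S) = r := by
  have hdiff : (h.component s : S) - r = (s - r) - (s - h.component s) := by abel
  have := h.eq_zero_of_mem _ (R.sub_mem (h.component s).2 hr)
    (hdiff ▸ J.sub_mem hs (h.sub_component_mem s))
  exact sub_eq_zero.mp this

noncomputable def proj (h : IsIdealComplement R J) : S →+* R where
  toFun := h.component
  map_one' := Subtype.ext <| h.component_eq_of_sub_mem R.one_mem (by simp)
  map_zero' := Subtype.ext <| h.component_eq_of_sub_mem R.zero_mem (by simp)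
  map_add' s t := Subtype.ext <| h.component_eq_of_sub_mem
    (R.add_mem (h.component s).2 (h.component t).2) <| by
      rw [Subring.coe_add, add_sub_add_comm]
      exact J.add_mem (h.sub_component_mem s) (h.sub_component_mem t)
  map_mul' s t := Subtype.ext <| h.component_eq_of_sub_mem
    (R.mul_mem (h.component s).2 (h.component t).2) <| by
      have e : s * t - h.component s * h.component t =
          h.component s * (t - h.component t) + (s - h.component s) * t := by noncomm_ring
      rw [Subring.coe_mul, e]
      exact J.add_mem (J.mul_mem_left _ _ (h.sub_component_mem t))
        (J.mul_mem_right _ _ (h.sub_component_mem s))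

theorem sub_proj_mem (h : IsIdealComplement R J) (s : S) : s - h.proj s ∈ J :=
  h.sub_component_mem s

theorem proj_eq_of_sub_mem (h : IsIdealComplement R J) {s r : S} (hr : r ∈ R)
    (hs : s - r ∈ J) : (h.proj s : S) = r :=
  h.component_eq_of_sub_mem hr hs

theorem proj_coe (h : IsIdealComplement R J) (r : R) : h.proj r = r :=
  Subtype.ext <| h.proj_eq_of_sub_mem r.2 (by simp)

theorem ker_proj (h : IsIdealComplement R J) : TwoSidedIdeal.ker h.proj = J := by
  ext x
  rw [TwoSidedIdeal.mem_ker]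
  constructor
  · intro hx
    have := h.sub_proj_mem x
    rwa [hx, ZeroMemClass.coe_zero, sub_zero] at this
  · intro hx
    exact Subtype.ext (h.proj_eq_of_sub_mem R.zero_mem (by simpa using hx))

noncomputable def extend {I : TwoSidedIdeal S} (h : IsIdealComplement R I) {f : S → S}
    (hf : IsRHomToR R I f) : S →+* R where
  toFun s := ⟨h.proj s + f (s - h.proj s),
    R.add_mem (h.proj s).2 (hf.1 _ (h.sub_proj_mem s))⟩
  map_one' := Subtype.ext <| show (h.proj 1 : S) + f (1 - h.proj 1) = 1 by
    rw [map_one, OneMemClass.coe_one, sub_self, hf.map_zero, add_zero]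
  map_zero' := Subtype.ext <| show (h.proj 0 : S) + f (0 - h.proj 0) = 0 by
    rw [map_zero, ZeroMemClass.coe_zero, sub_self, hf.map_zero, add_zero]
  map_add' s t := Subtype.ext <| show (h.proj (s + t) : S) + f (s + t - h.proj (s + t)) =
      (h.proj s + f (s - h.proj s)) + (h.proj t + f (t - h.proj t)) by
    have e : s + t - h.proj (s + t) = (s - h.proj s) + (t - h.proj t) := by
      rw [map_add, Subring.coe_add]; abel
    rw [e, hf.2.1 _ (h.sub_proj_mem s) _ (h.sub_proj_mem t), map_add, Subring.coe_add]
    abel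
  map_mul' s t := Subtype.ext <| show (h.proj (s * t) : S) + f (s * t - h.proj (s * t)) =
      (h.proj s + f (s - h.proj s)) * (h.proj t + f (t - h.proj t)) by
    set a := (h.proj s : S)
    set b := (h.proj t : S)
    have hi : s - a ∈ I := h.sub_proj_mem s
    have hj : t - b ∈ I := h.sub_proj_mem t
    have e : s * t - h.proj (s * t) = a * (t - b) + ((s - a) * b + (s - a) * (t - b)) := by
      rw [map_mul, Subring.coe_mul]; noncomm_ring
    rw [e, hf.2.1 _ (I.mul_mem_left _ _ hj) _ (I.add_mem (I.mul_mem_right _ _ hi)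
        (I.mul_mem_right _ _ hi)), hf.2.1 _ (I.mul_mem_right _ _ hi) _ (I.mul_mem_right _ _ hi),
      hf.2.2.1 _ (h.proj s).2 _ hj, hf.2.2.2.1 _ (h.proj t).2 _ hi, hf.2.2.2.2 _ hi _ hj,
      map_mul, Subring.coe_mul]
    noncomm_ring

theorem extend_apply_of_mem {I : TwoSidedIdeal S} (h : IsIdealComplement R I) {f : S → S}
    (hf : IsRHomToR R I f) {i : S} (hi : i ∈ I) : (h.extend hf i : S) = f i := by
  have h0 : (h.proj i : S) = 0 := h.proj_eq_of_sub_mem R.zero_mem (by simpa using hi)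
  simp [extend, h0]

theorem extend_coe {I : TwoSidedIdeal S} (h : IsIdealComplement R I) {f : S → S}
    (hf : IsRHomToR R I f) (r : R) : h.extend hf r = r :=
  Subtype.ext <| by simp [extend, h.proj_coe, hf.map_zero]

theorem eq_proj_of_coe_eq {I : TwoSidedIdeal S} (h : IsIdealComplement R J) {g : S → S}
    (hg : IsRHomToR R I g) (hJ : (J : Set S) = {s : S | ∃ i ∈ I, s = g i - i})
    {i : S} (hi : i ∈ I) : g i = h.proj i := by
  have hmem : g i - i ∈ J := by
    rw [← SetLike.mem_coe, hJ]
    exact ⟨i, hi, rfl⟩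
  refine (h.proj_eq_of_sub_mem (hg.1 i hi) ?_).symm
  simpa using J.neg_mem hmem

end IsIdealComplement

/-- Let `R` be a subring of `S` and `I` a two-sided ideal with
`R ∩ I = {0}` and `R + I = S`.  For each `R`-homomorphism `φ : I → R`, the set
`I_φ = {φ(i) − i : i ∈ I}` is a two-sided ideal of `S` with `R ∩ I_φ = {0}` and
`R + I_φ = S`; conversely every two-sided ideal `I′` with `R ∩ I′ = {0}` and
`R + I′ = S` is of the form `I_φ` for a unique `R`-homomorphism `φ : I → R`. -/
theorem stmt5 {S : Type*} [Ring S] (R : Subring S) (I : TwoSidedIdeal S)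
    (hRI : ∀ x : S, x ∈ R → x ∈ I → x = 0)
    (hsum : ∀ s : S, ∃ r ∈ R, ∃ i ∈ I, s = r + i) :
    (∀ f : S → S, IsRHomToR R I f →
      (∃ J : TwoSidedIdeal S, (J : Set S) = {s : S | ∃ i ∈ I, s = f i - i}) ∧
      (∀ s : S, (∃ i ∈ I, s = f i - i) → s ∈ R → s = 0) ∧
      (∀ s : S, ∃ r ∈ R, ∃ t : S, (∃ i ∈ I, t = f i - i) ∧ s = r + t)) ∧
    (∀ I' : TwoSidedIdeal S, (∀ x : S, x ∈ R → x ∈ I' → x = 0) →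
      (∀ s : S, ∃ r ∈ R, ∃ i ∈ I', s = r + i) →
      ∃ f : S → S, IsRHomToR R I f ∧
        (I' : Set S) = {s : S | ∃ i ∈ I, s = f i - i} ∧
        ∀ g : S → S, IsRHomToR R I g →
          (I' : Set S) = {s : S | ∃ i ∈ I, s = g i - i} → ∀ i ∈ I, g i = f i) := by
  have hI : IsIdealComplement R I := ⟨hRI, hsum⟩
  refine ⟨fun f hf => ?_, fun I' hRI' hsum' => ?_⟩
  · have hker (x : S) : x ∈ TwoSidedIdeal.ker (hI.extend hf) ↔ ∃ i ∈ I, x = f i - i := by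
      rw [mem_ker_iff_exists_sub hsum _ (hI.extend_coe hf)]
      exact exists_congr fun i => and_congr_right fun hi => by
        rw [hI.extend_apply_of_mem hf hi]
    obtain ⟨hR, hS⟩ := isIdealComplement_ker _ (hI.extend_coe hf)
    refine ⟨⟨_, Set.ext hker⟩, fun s hs hsR => hR s hsR ((hker s).2 hs),
      fun s => ?_⟩
    obtain ⟨r, hr, t, ht, rfl⟩ := hS s
    exact ⟨r, hr, t, (hker t).1 ht, rfl⟩
  · have hI' : IsIdealComplement R I' := ⟨hRI', hsum'⟩
    refine ⟨fun s => hI'.proj s, isRHomToR_of_retraction I _ hI'.proj_coe, ?_,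
      fun g hg hI'g i hi => hI'.eq_proj_of_coe_eq hg hI'g hi⟩
    exact (congrArg SetLike.coe hI'.ker_proj.symm).trans
      (Set.ext (mem_ker_iff_exists_sub hsum _ hI'.proj_coe))
end

section
/- Let S be a ring, R a subring of S, and let I and I′ be two-sided ideals of S with R ∩ I = {0} = R ∩ I′ and R + I = S = R + I′. Suppose that every nonzero R-homomorphism I → R is injective (in particular, this holds when I has no proper nonzero R-subrngs). Then I and I′ are R-isomorphic: there is an additive bijection Φ : I → I′ satisfying Φ(ri) = rΦ(i), Φ(ir) = Φ(i)r, and Φ(ij) = Φ(i)Φ(j) for all r ∈ R and i, j ∈ I. -/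
/-- Let `R` be a subring of `S` and `I`, `I′` two-sided ideals of `S`,
each intersecting `R` trivially and with `R + I = S = R + I′`.  If every nonzero
`R`-homomorphism `I → R` is injective, then `I` and `I′` are `R`-isomorphic. -/
theorem stmt7 {S : Type*} [Ring S] (R : Subring S) (I I' : TwoSidedIdeal S)
    (hRI : ∀ x : S, x ∈ R → x ∈ I → x = 0)
    (hRI' : ∀ x : S, x ∈ R → x ∈ I' → x = 0)
    (hsum : ∀ s : S, ∃ r ∈ R, ∃ i ∈ I, s = r + i)
    (hsum' : ∀ s : S, ∃ r ∈ R, ∃ i ∈ I', s = r + i)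
    (hinj : ∀ f : S → S, IsRHomToR R I f → (∃ i ∈ I, f i ≠ 0) →
      ∀ i ∈ I, ∀ j ∈ I, f i = f j → i = j) :
    ∃ Φ : S → S,
      (∀ i ∈ I, Φ i ∈ I') ∧
      (∀ i ∈ I, ∀ j ∈ I, Φ i = Φ j → i = j) ∧
      (∀ x ∈ I', ∃ i ∈ I, Φ i = x) ∧
      (∀ i ∈ I, ∀ j ∈ I, Φ (i + j) = Φ i + Φ j) ∧
      (∀ r ∈ R, ∀ i ∈ I, Φ (r * i) = r * Φ i) ∧
      (∀ r ∈ R, ∀ i ∈ I, Φ (i * r) = Φ i * r) ∧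
      (∀ i ∈ I, ∀ j ∈ I, Φ (i * j) = Φ i * Φ j) := by
  classical
  -- the projection of `S` onto `R` along `I'`
  have hφex : ∃ φ : S → S, ∀ s : S, φ s ∈ R ∧ s - φ s ∈ I' := by
    refine ⟨fun s => (hsum' s).choose, fun s => ?_⟩
    obtain ⟨hr, i, hi, hs⟩ := (hsum' s).choose_spec
    refine ⟨hr, ?_⟩
    show s - (hsum' s).choose ∈ I'
    set r := (hsum' s).choose with hrdef
    have : s - r = i := by rw [hs]; abel
    rw [this]; exact hi
  obtain ⟨φ, hφ⟩ := hφex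
  -- uniqueness of the decomposition
  have huniq : ∀ s r : S, r ∈ R → s - r ∈ I' → φ s = r := by
    intro s r hr h
    have hmem : φ s - r ∈ I' := by
      have heq : (s - r) - (s - φ s) = φ s - r := by abel
      rw [← heq]
      exact sub_mem h (hφ s).2
    have := hRI' (φ s - r) (sub_mem (hφ s).1 hr) hmem
    exact sub_eq_zero.mp this
  -- φ is an R-homomorphism I → R
  have hhom : IsRHomToR R I φ := by
    refine ⟨fun i _ => (hφ i).1, ?_, ?_, ?_, ?_⟩
    · intro i _ j _
      refine huniq _ _ (add_mem (hφ i).1 (hφ j).1) ?_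
      have heq : (i + j) - (φ i + φ j) = (i - φ i) + (j - φ j) := by abel
      rw [heq]; exact add_mem (hφ i).2 (hφ j).2
    · intro r hr i _
      refine huniq _ _ (mul_mem hr (hφ i).1) ?_
      rw [← mul_sub]
      exact I'.mul_mem_left _ _ (hφ i).2
    · intro r hr i _
      refine huniq _ _ (mul_mem (hφ i).1 hr) ?_
      rw [← sub_mul]
      exact I'.mul_mem_right _ _ (hφ i).2
    · intro i _ j _
      refine huniq _ _ (mul_mem (hφ i).1 (hφ j).1) ?_
      have heq : i * j - φ i * φ j = φ i * (j - φ j) + (i - φ i) * j := by noncomm_ring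
      rw [heq]
      exact add_mem (I'.mul_mem_left _ _ (hφ j).2) (I'.mul_mem_right _ _ (hφ i).2)
  have hφ0 : φ 0 = 0 := huniq 0 0 R.zero_mem (by simpa using I'.zero_mem)
  by_cases hz : ∀ i ∈ I, φ i = 0
  · -- Case 1: φ vanishes on I; then I = I' and the identity works.
    refine ⟨id, ?_, ?_, ?_, ?_, ?_, ?_, ?_⟩
    · intro i hi
      have := (hφ i).2
      rwa [hz i hi, sub_zero] at this
    · intro i _ j _ h; exact h
    · intro x hx
      obtain ⟨r, hr, i, hi, hxs⟩ := hsum x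
      have hphi : φ i = -r := by
        refine huniq _ _ (neg_mem hr) ?_
        have heq : i - -r = x := by rw [hxs]; abel
        rw [heq]; exact hx
      have hr0 : r = 0 := by
        have := hz i hi
        rw [hphi] at this
        simpa using this
      exact ⟨i, hi, by simp [hxs, hr0]⟩
    · intro i _ j _; rfl
    · intro r _ i _; rfl
    · intro r _ i _; rfl
    · intro i _ j _; rfl
  · -- Case 2: φ is nonzero, hence injective on I.
    push_neg at hz
    obtain ⟨i₀, hi₀, hφi₀⟩ := hz
    have hinjφ := hinj φ hhom ⟨i₀, hi₀, hφi₀⟩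
    -- I ∩ I' = 0
    have hcap : ∀ z : S, z ∈ I → z ∈ I' → z = 0 := by
      intro z hzI hzI'
      have h1 : φ z = 0 := huniq z 0 R.zero_mem (by simpa using hzI')
      exact hinjφ z hzI 0 I.zero_mem (by rw [h1, hφ0])
    refine ⟨fun s => φ s - s, ?_, ?_, ?_, ?_, ?_, ?_, ?_⟩
    · intro i _
      show φ i - i ∈ I'
      have heq : φ i - i = -(i - φ i) := by abel
      rw [heq]; exact neg_mem (hφ i).2
    · intro i hi j hj h
      have h' : φ i - i = φ j - j := h
      have h2 : φ i - φ j = i - j := sub_eq_sub_iff_sub_eq_sub.mp h'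
      have hmem : i - j ∈ I := sub_mem hi hj
      have hR : i - j ∈ R := by rw [← h2]; exact sub_mem (hφ i).1 (hφ j).1
      exact sub_eq_zero.mp (hRI _ hR hmem)
    · intro x hx
      obtain ⟨r, hr, i, hi, hxs⟩ := hsum x
      refine ⟨-i, I.neg_mem hi, ?_⟩
      have hφneg : φ (-i) = r := by
        refine huniq _ _ hr ?_
        have heq : -i - r = -(i - -r) := by abel
        rw [heq]
        have hix : i - -r = x := by rw [hxs]; abel
        rw [hix]; exact I'.neg_mem hx
      show φ (-i) - -i = x
      rw [hφneg, hxs]; abel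
    · intro i hi j hj
      show φ (i + j) - (i + j) = (φ i - i) + (φ j - j)
      rw [hhom.2.1 i hi j hj]; abel
    · intro r hr i hi
      show φ (r * i) - r * i = r * (φ i - i)
      rw [hhom.2.2.1 r hr i hi, mul_sub]
    · intro r hr i hi
      show φ (i * r) - i * r = (φ i - i) * r
      rw [hhom.2.2.2.1 r hr i hi, sub_mul]
    · intro i hi j hj
      show φ (i * j) - i * j = (φ i - i) * (φ j - j)
      rw [hhom.2.2.2.2 i hi j hj]
      have h1 : (i - φ i) * j = 0 :=
        hcap _ (I.mul_mem_left _ _ hj) (I'.mul_mem_right _ _ (hφ i).2)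
      have h2 : i * (j - φ j) = 0 :=
        hcap _ (I.mul_mem_right _ _ hi) (I'.mul_mem_left _ _ (hφ j).2)
      have h1' : φ i * j = i * j := by
        rw [sub_mul] at h1; exact (sub_eq_zero.mp h1).symm
      have h2' : i * φ j = i * j := by
        rw [mul_sub] at h2; exact (sub_eq_zero.mp h2).symm
      have e : (φ i - i) * (φ j - j) = φ i * φ j - φ i * j - i * φ j + i * j := by
        noncomm_ring
      rw [e, h1', h2']; abel
end

section
/- Let S be a ring, R a maximal subring of S, and I a nonzero two-sided ideal of S with R ∩ I = {0} and I·I ≠ 0. Then: (1) the two-sided ideals of S that are contained in R are exactly the two-sided ideals A of R satisfying A ⊆ ann_R(I); (2) the two-sided ideals of S that contain I are exactly the sets A + I, where A is a two-sided ideal of R. -/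
/-- Let `R` be a maximal subring of `S` and `I` a nonzero two-sided
ideal of `S` with `R ∩ I = {0}` and `I·I ≠ 0`.  Then (1) the two-sided ideals of `S`
contained in `R` are exactly the two-sided ideals `A` of `R` with `A ⊆ ann_R(I)`;
(2) the two-sided ideals of `S` containing `I` are exactly the sets `A + I` with `A`
a two-sided ideal of `R`. -/
theorem stmt8 {S : Type*} [Ring S] (R : Subring S) (hmax : IsMaximalSubring R)
    (I : TwoSidedIdeal S) (hI : I ≠ ⊥)
    (hRI : ∀ x : S, x ∈ R → x ∈ I → x = 0)
    (hIsq : ∃ x ∈ I, ∃ y ∈ I, x * y ≠ 0) :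
    -- (1) ideals of `S` contained in `R` come from ideals of `R` inside `ann_R(I)` …
    ((∀ J : TwoSidedIdeal S, (J : Set S) ⊆ (R : Set S) →
        ∃ A : TwoSidedIdeal R,
          (J : Set S) = Subtype.val '' (A : Set R) ∧
          ∀ a ∈ A, ∀ i ∈ I, (a : S) * i = 0 ∧ i * (a : S) = 0) ∧
      -- … and conversely
      (∀ A : TwoSidedIdeal R,
        (∀ a ∈ A, ∀ i ∈ I, (a : S) * i = 0 ∧ i * (a : S) = 0) →
        ∃ J : TwoSidedIdeal S, (J : Set S) = Subtype.val '' (A : Set R))) ∧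
    -- (2) ideals of `S` containing `I` are exactly the sets `A + I`, `A` an ideal of `R`
    ((∀ J : TwoSidedIdeal S, (I : Set S) ⊆ (J : Set S) →
        ∃ A : TwoSidedIdeal R,
          (J : Set S) = {s : S | ∃ a ∈ A, ∃ i ∈ I, s = (a : S) + i}) ∧
      (∀ A : TwoSidedIdeal R, ∃ J : TwoSidedIdeal S,
        (J : Set S) = {s : S | ∃ a ∈ A, ∃ i ∈ I, s = (a : S) + i})) := by
  -- Key decomposition: S = R + I
  have hdecomp : ∀ s : S, ∃ r ∈ R, ∃ i ∈ I, s = r + i := by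
    set T : Subring S :=
    { carrier := {s : S | ∃ r ∈ R, ∃ i ∈ I, s = r + i}
      one_mem' := ⟨1, R.one_mem, 0, I.zero_mem, by (first | noncomm_ring | abel)⟩
      mul_mem' := by
        rintro x y ⟨r, hr, i, hi, rfl⟩ ⟨r', hr', i', hi', rfl⟩
        exact ⟨r * r', R.mul_mem hr hr', r * i' + i * r' + i * i',
          I.add_mem (I.add_mem (I.mul_mem_left _ _ hi') (I.mul_mem_right _ _ hi))
            (I.mul_mem_left _ _ hi'), by (first | noncomm_ring | abel)⟩
      add_mem' := by
        rintro x y ⟨r, hr, i, hi, rfl⟩ ⟨r', hr', i', hi', rfl⟩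
        exact ⟨r + r', R.add_mem hr hr', i + i', I.add_mem hi hi', by (first | noncomm_ring | abel)⟩
      zero_mem' := ⟨0, R.zero_mem, 0, I.zero_mem, by (first | noncomm_ring | abel)⟩
      neg_mem' := by
        rintro x ⟨r, hr, i, hi, rfl⟩
        exact ⟨-r, R.neg_mem hr, -i, I.neg_mem hi, by (first | noncomm_ring | abel)⟩ } with hTdef
    have hRT : R ≤ T := fun r hr => ⟨r, hr, 0, I.zero_mem, by (first | noncomm_ring | abel)⟩
    rcases hmax.2 T hRT with hT | hT
    · exfalso
      apply hI
      refine TwoSidedIdeal.ext fun x => ?_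
      rw [TwoSidedIdeal.mem_bot]
      constructor
      · intro hx
        have hxT : x ∈ T := ⟨0, R.zero_mem, x, hx, by (first | noncomm_ring | abel)⟩
        rw [hT] at hxT
        exact hRI x hxT hx
      · rintro rfl; exact I.zero_mem
    · intro s
      have : s ∈ T := by rw [hT]; exact Subring.mem_top s
      exact this
  -- the restriction-to-R ideal, used twice
  have mkA : ∀ J : TwoSidedIdeal S, ∃ A : TwoSidedIdeal R,
      (A : Set R) = {a : R | (a : S) ∈ J} := by
    intro J
    refine ⟨TwoSidedIdeal.mk' {a : R | (a : S) ∈ J} (by simpa using J.zero_mem)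
      (fun {x y} hx hy => by simpa using J.add_mem hx hy)
      (fun {x} hx => by simpa using J.neg_mem hx)
      (fun {x y} hy => by push_cast; exact J.mul_mem_left _ _ hy)
      (fun {x y} hx => by push_cast; exact J.mul_mem_right _ _ hx),
      TwoSidedIdeal.coe_mk' _ _ _ _ _ _⟩
  refine ⟨⟨?_, ?_⟩, ?_, ?_⟩
  · -- (1) forward
    intro J hJR
    obtain ⟨A, hA⟩ := mkA J
    refine ⟨A, ?_, ?_⟩
    · rw [hA]
      ext s
      constructor
      · intro hs
        exact ⟨⟨s, hJR hs⟩, hs, rfl⟩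
      · rintro ⟨a, ha, rfl⟩
        exact ha
    · intro a ha i hi
      have haJ : (a : S) ∈ J := by
        have : a ∈ (A : Set R) := ha
        rw [hA] at this
        exact this
      constructor
      · exact hRI _ (hJR (J.mul_mem_right _ _ haJ)) (I.mul_mem_left _ _ hi)
      · exact hRI _ (hJR (J.mul_mem_left _ _ haJ)) (I.mul_mem_right _ _ hi)
  · -- (1) converse
    intro A hann
    refine ⟨TwoSidedIdeal.mk' (Subtype.val '' (A : Set R))
      ⟨0, A.zero_mem, rfl⟩
      ?_ ?_ ?_ ?_, TwoSidedIdeal.coe_mk' _ _ _ _ _ _⟩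
    · rintro x y ⟨a, ha, rfl⟩ ⟨b, hb, rfl⟩
      exact ⟨a + b, A.add_mem ha hb, by push_cast; (first | noncomm_ring | abel)⟩
    · rintro x ⟨a, ha, rfl⟩
      exact ⟨-a, A.neg_mem ha, by push_cast; (first | noncomm_ring | abel)⟩
    · rintro x y ⟨a, ha, rfl⟩
      obtain ⟨r, hr, i, hi, rfl⟩ := hdecomp x
      refine ⟨⟨r, hr⟩ * a, A.mul_mem_left _ _ ha, ?_⟩
      have h0 : i * (a : S) = 0 := (hann a ha i hi).2
      push_cast
      rw [add_mul, h0, add_zero]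
    · rintro x y ⟨a, ha, rfl⟩
      obtain ⟨r, hr, i, hi, rfl⟩ := hdecomp y
      refine ⟨a * ⟨r, hr⟩, A.mul_mem_right _ _ ha, ?_⟩
      have h0 : (a : S) * i = 0 := (hann a ha i hi).1
      push_cast
      rw [mul_add, h0, add_zero]
  · -- (2) forward
    intro J hIJ
    obtain ⟨A, hA⟩ := mkA J
    refine ⟨A, ?_⟩
    ext s
    constructor
    · intro hs
      obtain ⟨r, hr, i, hi, rfl⟩ := hdecomp s
      have hrJ : r ∈ J := by
        have : r + i - i ∈ J := J.sub_mem hs (hIJ hi)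
        simpa using this
      refine ⟨⟨r, hr⟩, ?_, i, hi, rfl⟩
      show (⟨r, hr⟩ : R) ∈ (A : Set R)
      rw [hA]; exact hrJ
    · rintro ⟨a, ha, i, hi, rfl⟩
      have haJ : (a : S) ∈ J := by
        have : a ∈ (A : Set R) := ha
        rw [hA] at this; exact this
      exact J.add_mem haJ (hIJ hi)
  · -- (2) converse
    intro A
    refine ⟨TwoSidedIdeal.mk' {s : S | ∃ a ∈ A, ∃ i ∈ I, s = (a : S) + i}
      ⟨0, A.zero_mem, 0, I.zero_mem, by simp⟩
      ?_ ?_ ?_ ?_, TwoSidedIdeal.coe_mk' _ _ _ _ _ _⟩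
    · rintro x y ⟨a, ha, i, hi, rfl⟩ ⟨b, hb, j, hj, rfl⟩
      exact ⟨a + b, A.add_mem ha hb, i + j, I.add_mem hi hj, by push_cast; (first | noncomm_ring | abel)⟩
    · rintro x ⟨a, ha, i, hi, rfl⟩
      exact ⟨-a, A.neg_mem ha, -i, I.neg_mem hi, by push_cast; (first | noncomm_ring | abel)⟩
    · rintro x y ⟨a, ha, i, hi, rfl⟩
      obtain ⟨r, hr, i', hi', rfl⟩ := hdecomp x
      refine ⟨⟨r, hr⟩ * a, A.mul_mem_left _ _ ha, r * i + i' * (a : S) + i' * i,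
        I.add_mem (I.add_mem (I.mul_mem_left _ _ hi) (I.mul_mem_right _ _ hi'))
          (I.mul_mem_left _ _ hi), by push_cast; (first | noncomm_ring | abel)⟩
    · rintro x y ⟨a, ha, i, hi, rfl⟩
      obtain ⟨r, hr, i', hi', rfl⟩ := hdecomp y
      refine ⟨a * ⟨r, hr⟩, A.mul_mem_right _ _ ha, (a : S) * i' + i * r + i * i',
        I.add_mem (I.add_mem (I.mul_mem_left _ _ hi') (I.mul_mem_right _ _ hi))
          (I.mul_mem_left _ _ hi'), by push_cast; (first | noncomm_ring | abel)⟩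
end

section
/- Let S be a ring, R a maximal subring of S, and I a nonzero two-sided ideal of S with R ∩ I = {0}. Then S is semiprime if and only if R is semiprime and I·I ≠ 0. -/
/-- A ring `A` is semiprime if `aAa = 0` implies `a = 0`. -/
def IsSemiprimeRing (A : Type*) [Ring A] : Prop :=
  ∀ a : A, (∀ x : A, a * x * a = 0) → a = 0

/-!
If `M ⊆ I` is a non-unital subring stable under multiplication by `R`, then `R + M` is a subring
containing `R`, so by maximality and `R ∩ I = 0` either `M = 0` or `M = I`. In particular
`S = R ⊕ I` and `I` is a minimal ideal of `S`.

If `(r + i) S (r + i) = 0`, then `r R r ⊆ R ∩ I = 0`, so `r = 0` when `R` is semiprime; and an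
element `i ≠ 0` of `I` with `i S i = 0` generates a square-zero ideal, which by minimality is `I`.
Conversely, if `a R a = 0`, the elements of `I` killed on the left by `a R` form such an `M`; it
contains `a I a`, and if it is all of `I` then `a I = 0`. Either way `a S a = a I a = 0`.
-/

section

variable {S : Type*} [Ring S]

namespace TwoSidedIdeal

theorem mul_eq_zero_of_mem_span_singleton {i : S} (hi : ∀ s, i * s * i = 0) {x y : S}
    (hx : x ∈ span {i}) (hy : y ∈ span {i}) : x * y = 0 := by
  have hiy : ∀ s, i * s * y = 0 := by
    induction hy using span_induction with
    | mem y hy => rwa [Set.mem_singleton_iff.mp hy]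
    | zero => simp
    | add y z _ _ ihy ihz => simp [mul_add, ihy, ihz]
    | neg y _ ih => simp [ih]
    | left_absorb a y _ ih => intro s; rw [← mul_assoc, mul_assoc i, ih]
    | right_absorb b y _ ih => intro s; rw [← mul_assoc, ih, zero_mul]
  suffices ∀ s, x * s * y = 0 by simpa using this 1
  induction hx using span_induction with
  | mem x hx => rwa [Set.mem_singleton_iff.mp hx]
  | zero => simp
  | add x z _ _ ihx ihz => simp [add_mul, ihx, ihz]
  | neg x _ ih => simp [ih]
  | left_absorb a x _ ih => intro s; rw [mul_assoc a, mul_assoc a, ih, mul_zero]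
  | right_absorb b x _ ih => intro s; rw [mul_assoc x, ih]

theorem eq_zero_of_forall_mul_mul_eq_zero {I : TwoSidedIdeal S}
    (hmin : ∀ J : TwoSidedIdeal S, J ≤ I → J = ⊥ ∨ J = I) (hII : ∃ x ∈ I, ∃ y ∈ I, x * y ≠ 0)
    {i : S} (hiI : i ∈ I) (hi : ∀ s, i * s * i = 0) : i = 0 := by
  obtain ⟨x, hx, y, hy, hxy⟩ := hII
  rcases hmin (span {i}) (span_le.mpr (Set.singleton_subset_iff.mpr hiI)) with hbot | htop
  · simpa [hbot] using subset_span (Set.mem_singleton i)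
  · rw [← htop] at hx hy
    exact absurd (mul_eq_zero_of_mem_span_singleton hi hx hy) hxy

end TwoSidedIdeal

namespace IsMaximalSubring

variable {R : Subring S} {I : TwoSidedIdeal S}

theorem subset_or_forall_exists_add_eq (hmax : IsMaximalSubring R) (M : NonUnitalSubring S)
    (hRM : ∀ r ∈ R, ∀ m ∈ M, r * m ∈ M ∧ m * r ∈ M) :
    (M : Set S) ⊆ R ∨ ∀ s, ∃ r ∈ R, ∃ m ∈ M, r + m = s := by
  let T : Subring S :=
    { carrier := {s | ∃ r ∈ R, ∃ m ∈ M, r + m = s}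
      zero_mem' := ⟨0, R.zero_mem, 0, M.zero_mem, add_zero 0⟩
      one_mem' := ⟨1, R.one_mem, 0, M.zero_mem, add_zero 1⟩
      add_mem' := by
        rintro _ _ ⟨r, hr, m, hm, rfl⟩ ⟨r', hr', m', hm', rfl⟩
        exact ⟨r + r', R.add_mem hr hr', m + m', M.add_mem hm hm', by abel⟩
      neg_mem' := by
        rintro _ ⟨r, hr, m, hm, rfl⟩
        exact ⟨-r, R.neg_mem hr, -m, M.neg_mem hm, by abel⟩
      mul_mem' := by
        rintro _ _ ⟨r, hr, m, hm, rfl⟩ ⟨r', hr', m', hm', rfl⟩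
        refine ⟨r * r', R.mul_mem hr hr', r * m' + m * r' + m * m',
          M.add_mem (M.add_mem (hRM r hr m' hm').1 (hRM r' hr' m hm).2) (M.mul_mem hm hm'), ?_⟩
        noncomm_ring }
  rcases hmax.2 T fun r hr ↦ ⟨r, hr, 0, M.zero_mem, add_zero r⟩ with hTR | hT
  · exact .inl fun m hm ↦ hTR ▸ ⟨0, R.zero_mem, m, hm, zero_add m⟩
  · exact .inr fun s ↦ (hT ▸ Subring.mem_top s : s ∈ T)

theorem forall_eq_zero_or_subset (hmax : IsMaximalSubring R) (hRI : ∀ x ∈ R, x ∈ I → x = 0)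
    (M : NonUnitalSubring S) (hRM : ∀ r ∈ R, ∀ m ∈ M, r * m ∈ M ∧ m * r ∈ M)
    (hMI : (M : Set S) ⊆ I) :
    (∀ m ∈ M, m = 0) ∨ (I : Set S) ⊆ M := by
  rcases hmax.subset_or_forall_exists_add_eq M hRM with hMR | hdec
  · exact .inl fun m hm ↦ hRI m (hMR hm) (hMI hm)
  · refine .inr fun x hx ↦ ?_
    obtain ⟨r, hr, m, hm, rfl⟩ := hdec x
    have hrI : r ∈ I := by simpa using I.sub_mem hx (hMI hm)
    rwa [hRI r hr hrI, zero_add]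

theorem forall_exists_add_eq (hmax : IsMaximalSubring R) (hRI : ∀ x ∈ R, x ∈ I → x = 0)
    (hI : I ≠ ⊥) : ∀ s, ∃ r ∈ R, ∃ i ∈ I, r + i = s := by
  refine (hmax.subset_or_forall_exists_add_eq (.ofClass I) fun r _ i hi ↦
    ⟨I.mul_mem_left r i hi, I.mul_mem_right i r hi⟩).resolve_left fun hIR ↦ hI ?_
  ext x
  exact ⟨fun hx ↦ hRI x (hIR hx) hx, fun hx ↦ (TwoSidedIdeal.mem_bot S).mp hx ▸ I.zero_mem⟩

theorem eq_bot_or_eq_of_le (hmax : IsMaximalSubring R) (hRI : ∀ x ∈ R, x ∈ I → x = 0)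
    (J : TwoSidedIdeal S) (hJI : J ≤ I) : J = ⊥ ∨ J = I := by
  rcases hmax.forall_eq_zero_or_subset hRI (.ofClass J)
      (fun r _ j hj ↦ ⟨J.mul_mem_left r j hj, J.mul_mem_right j r hj⟩) hJI with hJ | hIJ
  · exact .inl (eq_bot_iff.mpr fun x hx ↦ (TwoSidedIdeal.mem_bot S).mpr (hJ x hx))
  · exact .inr (le_antisymm hJI hIJ)

theorem mul_mul_eq_zero_of_mem (hmax : IsMaximalSubring R) (hRI : ∀ x ∈ R, x ∈ I → x = 0)
    {a : S} (haR : ∀ r ∈ R, a * r * a = 0) {i : S} (hi : i ∈ I) : a * i * a = 0 := by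
  let M : NonUnitalSubring S :=
    { carrier := {x | x ∈ I ∧ ∀ r ∈ R, a * r * x = 0}
      zero_mem' := ⟨I.zero_mem, fun r _ ↦ mul_zero _⟩
      add_mem' := fun ⟨hx, hx'⟩ ⟨hy, hy'⟩ ↦
        ⟨I.add_mem hx hy, fun r hr ↦ by rw [mul_add, hx' r hr, hy' r hr, add_zero]⟩
      neg_mem' := fun ⟨hx, hx'⟩ ↦ ⟨I.neg_mem hx, fun r hr ↦ by rw [mul_neg, hx' r hr, neg_zero]⟩
      mul_mem' := fun {x y} ⟨hx, hx'⟩ _ ↦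
        ⟨I.mul_mem_right x y hx, fun r hr ↦ by rw [← mul_assoc, hx' r hr, zero_mul]⟩ }
  have hRM : ∀ r ∈ R, ∀ m ∈ M, r * m ∈ M ∧ m * r ∈ M := fun r hr m ⟨hm, hm'⟩ ↦
    ⟨⟨I.mul_mem_left r m hm, fun r' hr' ↦ by
        rw [← mul_assoc, mul_assoc a, hm' _ (R.mul_mem hr' hr)]⟩,
      ⟨I.mul_mem_right m r hm, fun r' hr' ↦ by rw [← mul_assoc, hm' r' hr', zero_mul]⟩⟩
  rcases hmax.forall_eq_zero_or_subset hRI M hRM fun _ hm ↦ hm.1 with hM | hIM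
  · refine hM _ ⟨I.mul_mem_right _ a (I.mul_mem_left a i hi), fun r hr ↦ ?_⟩
    rw [← mul_assoc, ← mul_assoc, haR r hr, zero_mul, zero_mul]
  · rw [← mul_one a, (hIM hi).2 1 R.one_mem, zero_mul]

end IsMaximalSubring

end

/-- Let `R` be a maximal subring of `S` and `I` a nonzero two-sided
ideal of `S` with `R ∩ I = {0}`.  Then `S` is semiprime iff `R` is semiprime and
`I·I ≠ 0`. -/
theorem stmt9 {S : Type*} [Ring S] (R : Subring S) (hmax : IsMaximalSubring R)
    (I : TwoSidedIdeal S) (hI : I ≠ ⊥)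
    (hRI : ∀ x : S, x ∈ R → x ∈ I → x = 0) :
    IsSemiprimeRing S ↔
      ((∀ a ∈ R, (∀ x ∈ R, a * x * a = 0) → a = 0) ∧ ∃ x ∈ I, ∃ y ∈ I, x * y ≠ 0) := by
  have hdec := hmax.forall_exists_add_eq hRI hI
  constructor
  · intro hS
    refine ⟨fun a _ haR ↦ hS a fun s ↦ ?_, ?_⟩
    · obtain ⟨r, hr, i, hi, rfl⟩ := hdec s
      rw [mul_add, add_mul, haR r hr, hmax.mul_mul_eq_zero_of_mem hRI haR hi, add_zero]
    · obtain ⟨i, hi, hi0⟩ : ∃ i ∈ I, i ≠ 0 := by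
        by_contra! h
        exact hI (eq_bot_iff.mpr fun x hx ↦ (TwoSidedIdeal.mem_bot S).mpr (h x hx))
      obtain ⟨s, hs⟩ : ∃ s, i * s * i ≠ 0 := by
        by_contra! h
        exact hi0 (hS i h)
      exact ⟨i, hi, s * i, I.mul_mem_left s i hi, by rwa [← mul_assoc]⟩
  · rintro ⟨hR, hII⟩ s hs
    obtain ⟨r, hr, i, hi, rfl⟩ := hdec s
    have hr0 : r = 0 := hR r hr fun x hx ↦ hRI _ (R.mul_mem (R.mul_mem hr hx) hr) <| by
      have hrxr : r * x * r = (r + i) * x * (r + i) - (r * x * i + i * x * (r + i)) := by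
        noncomm_ring
      rw [hrxr, hs x]
      exact I.sub_mem I.zero_mem (I.add_mem (I.mul_mem_left _ _ hi)
        (I.mul_mem_right _ _ (I.mul_mem_right _ _ hi)))
    subst hr0
    simp only [zero_add] at hs ⊢
    exact TwoSidedIdeal.eq_zero_of_forall_mul_mul_eq_zero (hmax.eq_bot_or_eq_of_le hRI) hII hi hs
end

section
/- Let S be a ring, R a maximal subring of S, and I a nonzero two-sided ideal of S with R ∩ I = {0}. Then the following are equivalent: (1) S is a prime ring; (2) {s ∈ S : sI = 0} = {0} and {s ∈ S : Is = 0} = {0}; (3) I·I ≠ 0, ann_R(I) = {0}, and the only R-homomorphism I → R is the zero map. Moreover, if S is prime then R is prime. -/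
section

variable {S : Type*} [Ring S]

theorem TwoSidedIdeal.exists_mem_ne_zero_of_ne_bot {I : TwoSidedIdeal S} (hI : I ≠ ⊥) :
    ∃ i ∈ I, i ≠ 0 := by
  by_contra! h
  exact hI (TwoSidedIdeal.ext fun x =>
    ⟨fun hx => (TwoSidedIdeal.mem_bot S).2 (h x hx),
      fun hx => (TwoSidedIdeal.mem_bot S).1 hx ▸ I.zero_mem⟩)

def TwoSidedIdeal.annihilator (I : TwoSidedIdeal S) : TwoSidedIdeal S :=
  .mk' {s | ∀ i ∈ I, s * i = 0 ∧ i * s = 0}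
    (fun i _ => ⟨zero_mul i, mul_zero i⟩)
    (fun hx hy i hi => ⟨by rw [add_mul, (hx i hi).1, (hy i hi).1, add_zero],
      by rw [mul_add, (hx i hi).2, (hy i hi).2, add_zero]⟩)
    (fun hx i hi => ⟨by rw [neg_mul, (hx i hi).1, neg_zero],
      by rw [mul_neg, (hx i hi).2, neg_zero]⟩)
    (fun hy i hi => ⟨by rw [mul_assoc, (hy i hi).1, mul_zero],
      by rw [← mul_assoc, (hy _ (I.mul_mem_right _ _ hi)).2]⟩)
    (fun hx i hi => ⟨by rw [mul_assoc, (hx _ (I.mul_mem_left _ _ hi)).1],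
      by rw [← mul_assoc, (hx i hi).2, zero_mul]⟩)

theorem TwoSidedIdeal.mem_annihilator {I : TwoSidedIdeal S} {s : S} :
    s ∈ I.annihilator ↔ ∀ i ∈ I, s * i = 0 ∧ i * s = 0 :=
  TwoSidedIdeal.mem_mk' _ _ _ _ _ _ s

theorem Subring.exists_ringHom_retraction (R : Subring S) (N : TwoSidedIdeal S)
    (hRN : ∀ x ∈ R, x ∈ N → x = 0) (hsum : ∀ s : S, ∃ r ∈ R, s - r ∈ N) :
    ∃ f : S →+* S, ∀ s, f s ∈ R ∧ s - f s ∈ N := by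
  let π : R →+* N.ringCon.Quotient := N.ringCon.mk'.comp R.subtype
  have hπ : Function.Bijective π := by
    refine ⟨(injective_iff_map_eq_zero π).2 fun r hr => Subtype.ext (hRN r r.2 ?_), fun q => ?_⟩
    · rw [← (N.ringCon.mk').map_zero] at hr
      exact (N.mem_iff _).2 ((RingCon.eq _).1 hr)
    · obtain ⟨s, rfl⟩ := N.ringCon.mk'_surjective q
      obtain ⟨r, hr, hsr⟩ := hsum s
      exact ⟨⟨r, hr⟩, ((RingCon.eq _).2 ((N.rel_iff _ _).2 hsr)).symm⟩
  let e := RingEquiv.ofBijective π hπ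
  refine ⟨R.subtype.comp (e.symm.toRingHom.comp N.ringCon.mk'), fun s => ⟨(e.symm _).2, ?_⟩⟩
  have h : π (e.symm (N.ringCon.mk' s)) = N.ringCon.mk' s := e.apply_symm_apply _
  exact (N.rel_iff _ _).1 ((RingCon.eq _).1 h.symm)

namespace IsRHomToR

variable {R : Subring S} {I : TwoSidedIdeal S} {f : S → S}

theorem map_zero_s10 (hf : IsRHomToR R I f) : f 0 = 0 := by
  simpa using hf.2.1 0 I.zero_mem 0 I.zero_mem

theorem map_sub (hf : IsRHomToR R I f) {x y : S} (hx : x ∈ I) (hy : y ∈ I) :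
    f (x - y) = f x - f y := by
  rw [eq_sub_iff_add_eq, ← hf.2.1 _ (I.sub_mem hx hy) _ hy, sub_add_cancel]

end IsRHomToR

namespace IsPrimeRing

variable {I : TwoSidedIdeal S}

theorem eq_zero_of_forall_mul_mem_eq_zero (hS : IsPrimeRing S) (hI : I ≠ ⊥) {s : S}
    (hs : ∀ i ∈ I, s * i = 0) : s = 0 := by
  obtain ⟨i, hi, hi0⟩ := TwoSidedIdeal.exists_mem_ne_zero_of_ne_bot hI
  refine (hS s i fun x => ?_).resolve_right hi0
  rw [mul_assoc]
  exact hs _ (I.mul_mem_left x i hi)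

theorem eq_zero_of_forall_mem_mul_eq_zero (hS : IsPrimeRing S) (hI : I ≠ ⊥) {s : S}
    (hs : ∀ i ∈ I, i * s = 0) : s = 0 := by
  obtain ⟨i, hi, hi0⟩ := TwoSidedIdeal.exists_mem_ne_zero_of_ne_bot hI
  exact (hS i s fun x => hs _ (I.mul_mem_right i x hi)).resolve_left hi0

theorem exists_mul_ne_zero (hS : IsPrimeRing S) (hI : I ≠ ⊥) : ∃ x ∈ I, ∃ y ∈ I, x * y ≠ 0 := by
  obtain ⟨x, hx, hx0⟩ := TwoSidedIdeal.exists_mem_ne_zero_of_ne_bot hI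
  by_contra! h
  exact hx0 (hS.eq_zero_of_forall_mul_mem_eq_zero hI (h x hx))

end IsPrimeRing

namespace IsMaximalSubring

variable {R : Subring S} {I : TwoSidedIdeal S}

theorem subset_or_forall_exists_add (hmax : IsMaximalSubring R) (J : NonUnitalSubring S)
    (hJ : ∀ r ∈ R, ∀ x ∈ J, r * x ∈ J ∧ x * r ∈ J) :
    (J : Set S) ⊆ R ∨ ∀ s : S, ∃ r ∈ R, ∃ x ∈ J, r + x = s := by
  let T : Subring S :=
    { carrier := {s | ∃ r ∈ R, ∃ x ∈ J, r + x = s}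
      one_mem' := ⟨1, R.one_mem, 0, J.zero_mem, add_zero 1⟩
      zero_mem' := ⟨0, R.zero_mem, 0, J.zero_mem, add_zero 0⟩
      add_mem' := by
        rintro _ _ ⟨r, hr, x, hx, rfl⟩ ⟨r', hr', x', hx', rfl⟩
        exact ⟨r + r', R.add_mem hr hr', x + x', J.add_mem hx hx', by abel⟩
      neg_mem' := by
        rintro _ ⟨r, hr, x, hx, rfl⟩
        exact ⟨-r, R.neg_mem hr, -x, J.neg_mem hx, (neg_add _ _).symm⟩
      mul_mem' := by
        rintro _ _ ⟨r, hr, x, hx, rfl⟩ ⟨r', hr', x', hx', rfl⟩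
        refine ⟨r * r', R.mul_mem hr hr', r * x' + x * r' + x * x', ?_, by noncomm_ring⟩
        exact J.add_mem (J.add_mem (hJ r hr x' hx').1 (hJ r' hr' x hx).2) (J.mul_mem hx hx') }
  rcases hmax.2 T fun r hr => ⟨r, hr, 0, J.zero_mem, add_zero r⟩ with hT | hT
  · left
    intro x hx
    have hxT : x ∈ T := ⟨0, R.zero_mem, x, hx, zero_add x⟩
    rwa [hT] at hxT
  · exact Or.inr fun s => (hT ▸ Subring.mem_top s : s ∈ T)

theorem eq_zero_or_forall_mem (hmax : IsMaximalSubring R)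
    (hRI : ∀ x : S, x ∈ R → x ∈ I → x = 0) (J : NonUnitalSubring S)
    (hJ : ∀ r ∈ R, ∀ x ∈ J, r * x ∈ J ∧ x * r ∈ J) (hJI : ∀ x ∈ J, x ∈ I) :
    (∀ x ∈ J, x = 0) ∨ ∀ i ∈ I, i ∈ J := by
  refine (hmax.subset_or_forall_exists_add J hJ).imp (fun h x hx => hRI x (h hx) (hJI x hx)) ?_
  intro h i hi
  obtain ⟨r, hr, x, hx, rfl⟩ := h i
  have hrI : r ∈ I := by simpa using I.sub_mem hi (hJI x hx)
  rwa [hRI r hr hrI, zero_add]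

theorem eq_zero_or_eq_zero_of_forall_mul_mul_eq_zero (hmax : IsMaximalSubring R)
    (hRI : ∀ x : S, x ∈ R → x ∈ I → x = 0) (hI : ∀ s : S, (∀ i ∈ I, s * i = 0) → s = 0)
    {T : Subring S} (hRT : R ≤ T) {a b : S} (hab : ∀ t ∈ T, a * t * b = 0) : a = 0 ∨ b = 0 := by
  let K : NonUnitalSubring S :=
    { carrier := {x | x ∈ I ∧ ∀ t ∈ T, a * t * x = 0}
      zero_mem' := ⟨I.zero_mem, by simp⟩
      add_mem' := fun hx hy =>
        ⟨I.add_mem hx.1 hy.1, fun t ht => by rw [mul_add, hx.2 t ht, hy.2 t ht, add_zero]⟩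
      neg_mem' := fun hx => ⟨I.neg_mem hx.1, fun t ht => by rw [mul_neg, hx.2 t ht, neg_zero]⟩
      mul_mem' := fun hx _ =>
        ⟨I.mul_mem_right _ _ hx.1, fun t ht => by rw [← mul_assoc, hx.2 t ht, zero_mul]⟩ }
  have hKR : ∀ r ∈ R, ∀ x ∈ K, r * x ∈ K ∧ x * r ∈ K := fun r hr x hx =>
    ⟨⟨I.mul_mem_left _ _ hx.1, fun t ht => by
        simpa [mul_assoc] using hx.2 (t * r) (T.mul_mem ht (hRT hr))⟩,
      ⟨I.mul_mem_right _ _ hx.1, fun t ht => by rw [← mul_assoc, hx.2 t ht, zero_mul]⟩⟩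
  -- `b I ⊆ K`, so `K = 0` forces `b I = 0`, while `K = I` forces `a I = 0`.
  rcases hmax.eq_zero_or_forall_mem hRI K hKR fun x hx => hx.1 with hK | hK
  · refine Or.inr (hI b fun i hi => hK _ ⟨I.mul_mem_left b i hi, fun t ht => ?_⟩)
    rw [← mul_assoc, hab t ht, zero_mul]
  · exact Or.inl (hI a fun i hi => by simpa using (hK i hi).2 1 T.one_mem)

theorem isRHomToR_eq_zero (hmax : IsMaximalSubring R) (hRI : ∀ x : S, x ∈ R → x ∈ I → x = 0)
    (hI : ∀ s : S, (∀ i ∈ I, i * s = 0) → s = 0) {f : S → S} (hf : IsRHomToR R I f) :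
    ∀ i ∈ I, f i = 0 := by
  have ⟨hfR, hfadd, hfl, hfr, hfmul⟩ := hf
  let K : NonUnitalSubring S :=
    { carrier := {x | x ∈ I ∧ f x = 0}
      zero_mem' := ⟨I.zero_mem, hf.map_zero_s10⟩
      add_mem' := fun hx hy =>
        ⟨I.add_mem hx.1 hy.1, by rw [hfadd _ hx.1 _ hy.1, hx.2, hy.2, add_zero]⟩
      neg_mem' := fun {x} hx => ⟨I.neg_mem hx.1, by
        simpa [hx.2, hf.map_zero_s10] using hf.map_sub I.zero_mem hx.1⟩
      mul_mem' := fun hx hy =>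
        ⟨I.mul_mem_right _ _ hx.1, by rw [hfmul _ hx.1 _ hy.1, hx.2, zero_mul]⟩ }
  have hKR : ∀ r ∈ R, ∀ x ∈ K, r * x ∈ K ∧ x * r ∈ K := fun r hr x hx =>
    ⟨⟨I.mul_mem_left _ _ hx.1, by rw [hfl r hr x hx.1, hx.2, mul_zero]⟩,
      ⟨I.mul_mem_right _ _ hx.1, by rw [hfr r hr x hx.1, hx.2, zero_mul]⟩⟩
  rcases hmax.eq_zero_or_forall_mem hRI K hKR fun x hx => hx.1 with hK | hK
  · intro j hj
    -- `i * (j - f j) ∈ ker f` for every `i ∈ I`, so `j = f j ∈ R ∩ I`.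
    have hjfj : j - f j = 0 := hI _ fun i hi => by
      have hij : i * j ∈ I := I.mul_mem_right _ _ hi
      have hifj : i * f j ∈ I := I.mul_mem_right _ _ hi
      rw [mul_sub]
      refine hK _ ⟨I.sub_mem hij hifj, ?_⟩
      rw [hf.map_sub hij hifj, hfmul i hi j hj, hfr _ (hfR j hj) i hi, sub_self]
    rw [hRI j (sub_eq_zero.1 hjfj ▸ hfR j hj) hj, hf.map_zero_s10]
  · exact fun i hi => (hK i hi).2

theorem eq_zero_of_mem_of_forall_mul_mem_eq_zero (hmax : IsMaximalSubring R)
    (hRI : ∀ x : S, x ∈ R → x ∈ I → x = 0) (hII : ∃ x ∈ I, ∃ y ∈ I, x * y ≠ 0) {x : S}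
    (hx : x ∈ I) (hxI : ∀ j ∈ I, x * j = 0) : x = 0 := by
  let K : NonUnitalSubring S :=
    { carrier := {x | x ∈ I ∧ ∀ j ∈ I, x * j = 0}
      zero_mem' := ⟨I.zero_mem, fun j _ => zero_mul j⟩
      add_mem' := fun hx hy =>
        ⟨I.add_mem hx.1 hy.1, fun j hj => by rw [add_mul, hx.2 j hj, hy.2 j hj, add_zero]⟩
      neg_mem' := fun hx => ⟨I.neg_mem hx.1, fun j hj => by rw [neg_mul, hx.2 j hj, neg_zero]⟩
      mul_mem' := fun hx hy =>
        ⟨I.mul_mem_right _ _ hx.1, fun j hj => by rw [mul_assoc, hx.2 _ (I.mul_mem_left _ _ hj)]⟩ }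
  have hKR : ∀ r ∈ R, ∀ x ∈ K, r * x ∈ K ∧ x * r ∈ K := fun r _ x hx =>
    ⟨⟨I.mul_mem_left _ _ hx.1, fun j hj => by rw [mul_assoc, hx.2 j hj, mul_zero]⟩,
      ⟨I.mul_mem_right _ _ hx.1, fun j hj => by rw [mul_assoc, hx.2 _ (I.mul_mem_left _ _ hj)]⟩⟩
  obtain ⟨y, hy, z, hz, hyz⟩ := hII
  exact ((hmax.eq_zero_or_forall_mem hRI K hKR fun x hx => hx.1).resolve_right
    fun hK => hyz ((hK y hy).2 z hz)) x ⟨hx, hxI⟩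

theorem eq_zero_of_mem_of_forall_mem_mul_eq_zero (hmax : IsMaximalSubring R)
    (hRI : ∀ x : S, x ∈ R → x ∈ I → x = 0) (hII : ∃ x ∈ I, ∃ y ∈ I, x * y ≠ 0) {x : S}
    (hx : x ∈ I) (hIx : ∀ j ∈ I, j * x = 0) : x = 0 := by
  let K : NonUnitalSubring S :=
    { carrier := {x | x ∈ I ∧ ∀ j ∈ I, j * x = 0}
      zero_mem' := ⟨I.zero_mem, fun j _ => mul_zero j⟩
      add_mem' := fun hx hy =>
        ⟨I.add_mem hx.1 hy.1, fun j hj => by rw [mul_add, hx.2 j hj, hy.2 j hj, add_zero]⟩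
      neg_mem' := fun hx => ⟨I.neg_mem hx.1, fun j hj => by rw [mul_neg, hx.2 j hj, neg_zero]⟩
      mul_mem' := fun hx hy =>
        ⟨I.mul_mem_right _ _ hx.1, fun j hj => by
          rw [← mul_assoc, hy.2 _ (I.mul_mem_right _ _ hj)]⟩ }
  have hKR : ∀ r ∈ R, ∀ x ∈ K, r * x ∈ K ∧ x * r ∈ K := fun r _ x hx =>
    ⟨⟨I.mul_mem_left _ _ hx.1, fun j hj => by rw [← mul_assoc, hx.2 _ (I.mul_mem_right _ _ hj)]⟩,
      ⟨I.mul_mem_right _ _ hx.1, fun j hj => by rw [← mul_assoc, hx.2 j hj, zero_mul]⟩⟩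
  obtain ⟨y, hy, z, hz, hyz⟩ := hII
  exact ((hmax.eq_zero_or_forall_mem hRI K hKR fun x hx => hx.1).resolve_right
    fun hK => hyz ((hK z hz).2 y hy)) x ⟨hx, hIx⟩

theorem eq_zero_of_mem_annihilator (hmax : IsMaximalSubring R) (hII : ∃ x ∈ I, ∃ y ∈ I, x * y ≠ 0)
    (hann : ∀ x ∈ R, (∀ i ∈ I, x * i = 0 ∧ i * x = 0) → x = 0)
    (hhom : ∀ f : S → S, IsRHomToR R I f → ∀ i ∈ I, f i = 0) {s : S}
    (hs : s ∈ I.annihilator) : s = 0 := by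
  set N := I.annihilator
  have hRN : ∀ x ∈ R, x ∈ N → x = 0 := fun x hx hxN =>
    hann x hx (TwoSidedIdeal.mem_annihilator.1 hxN)
  rcases hmax.subset_or_forall_exists_add (.ofClass N)
      (fun r _ x hx => ⟨N.mul_mem_left r x hx, N.mul_mem_right x r hx⟩) with hNR | hsum
  · exact hRN s (hNR hs) hs
  exfalso
  obtain ⟨f, hf⟩ := R.exists_ringHom_retraction N hRN fun s => by
    obtain ⟨r, hr, x, hx, rfl⟩ := hsum s
    exact ⟨r, hr, by rwa [add_sub_cancel_left]⟩
  have hfR : ∀ r ∈ R, f r = r := fun r hr =>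
    (sub_eq_zero.1 (hRN _ (R.sub_mem hr (hf r).1) (hf r).2)).symm
  have hfI : IsRHomToR R I f :=
    ⟨fun i _ => (hf i).1, fun i _ j _ => map_add f i j,
      fun r hr i _ => by rw [map_mul, hfR r hr], fun r hr i _ => by rw [map_mul, hfR r hr],
      fun i _ j _ => map_mul f i j⟩
  obtain ⟨x, hx, y, hy, hxy⟩ := hII
  have hxN : x ∈ N := by simpa [hhom f hfI x hx] using (hf x).2
  exact hxy (TwoSidedIdeal.mem_annihilator.1 hxN y hy).1

end IsMaximalSubring

end

/-- Let `R` be a maximal subring of `S` and `I` a nonzero two-sided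
ideal of `S` with `R ∩ I = {0}`.  TFAE: (1) `S` is prime; (2) the left and right
annihilators of `I` in `S` are zero; (3) `I·I ≠ 0`, `ann_R(I) = 0`, and the only
`R`-homomorphism `I → R` is zero.  Moreover if `S` is prime then `R` is prime. -/
theorem stmt10 {S : Type*} [Ring S] (R : Subring S) (hmax : IsMaximalSubring R)
    (I : TwoSidedIdeal S) (hI : I ≠ ⊥)
    (hRI : ∀ x : S, x ∈ R → x ∈ I → x = 0) :
    (IsPrimeRing S ↔
      ((∀ s : S, (∀ i ∈ I, s * i = 0) → s = 0) ∧
       (∀ s : S, (∀ i ∈ I, i * s = 0) → s = 0))) ∧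
    (IsPrimeRing S ↔
      ((∃ x ∈ I, ∃ y ∈ I, x * y ≠ 0) ∧
       (∀ x ∈ R, (∀ i ∈ I, x * i = 0 ∧ i * x = 0) → x = 0) ∧
       (∀ f : S → S, IsRHomToR R I f → ∀ i ∈ I, f i = 0))) ∧
    (IsPrimeRing S →
      ∀ a ∈ R, ∀ b ∈ R, (∀ x ∈ R, a * x * b = 0) → a = 0 ∨ b = 0) := by
  have prime_iff : IsPrimeRing S ↔ ((∀ s : S, (∀ i ∈ I, s * i = 0) → s = 0) ∧
      (∀ s : S, (∀ i ∈ I, i * s = 0) → s = 0)) :=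
    ⟨fun hS => ⟨fun _ => hS.eq_zero_of_forall_mul_mem_eq_zero hI,
        fun _ => hS.eq_zero_of_forall_mem_mul_eq_zero hI⟩,
      fun h a b hab => hmax.eq_zero_or_eq_zero_of_forall_mul_mul_eq_zero hRI h.1 le_top
        fun t _ => hab t⟩
  refine ⟨prime_iff, ⟨fun hS => ?_, fun h => ?_⟩, fun hS a _ b _ hab =>
    hmax.eq_zero_or_eq_zero_of_forall_mul_mul_eq_zero hRI (prime_iff.1 hS).1 le_rfl hab⟩
  · exact ⟨hS.exists_mul_ne_zero hI, fun x _ hx => (prime_iff.1 hS).1 x fun i hi => (hx i hi).1,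
      fun f hf => hmax.isRHomToR_eq_zero hRI (prime_iff.1 hS).2 hf⟩
  obtain ⟨hII, hann, hhom⟩ := h
  refine prime_iff.2 ⟨fun s hs => ?_, fun s hs => ?_⟩ <;>
    refine hmax.eq_zero_of_mem_annihilator hII hann hhom
      (TwoSidedIdeal.mem_annihilator.2 fun i hi => ?_)
  · exact ⟨hs i hi, hmax.eq_zero_of_mem_of_forall_mul_mem_eq_zero hRI hII
      (I.mul_mem_right _ _ hi) fun j hj => by rw [mul_assoc, hs j hj, mul_zero]⟩
  · exact ⟨hmax.eq_zero_of_mem_of_forall_mem_mul_eq_zero hRI hII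
      (I.mul_mem_left _ _ hi) fun j hj => by rw [← mul_assoc, hs j hj, zero_mul], hs i hi⟩
end

section
/- Let R be a ring and let I be a minimal nonzero two-sided ideal of R (i.e., I ≠ {0} and the only two-sided ideals of R contained in I are {0} and I) with I·I ≠ 0. Then the following are equivalent: (1) I ∩ Z(R) ≠ {0}; (2) I contains a nonzero central idempotent of R; (3) I is a direct summand of R as two-sided ideals, i.e., there is a two-sided ideal J of R with I ∩ J = {0} and I + J = R. -/
private lemma ne_bot_iff' {R : Type*} [Ring R] (J : TwoSidedIdeal R) :
    J ≠ ⊥ ↔ ∃ x ∈ J, x ≠ 0 := by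
  rw [← not_iff_not]
  push_neg
  constructor
  · rintro rfl x hx; exact (TwoSidedIdeal.mem_bot _).mp hx
  · intro h
    refine le_antisymm (fun x hx => (TwoSidedIdeal.mem_bot _).mpr (h x hx)) ?_
    intro x hx
    rw [(TwoSidedIdeal.mem_bot _).mp hx]; exact J.zero_mem

/-- From a nonzero central element in a minimal ideal with I² ≠ 0, get a
nonzero central idempotent in I. -/
private lemma central_to_idem {R : Type*} [Ring R] (I : TwoSidedIdeal R)
    (hmin : ∀ J : TwoSidedIdeal R, J ≤ I → J = ⊥ ∨ J = I)
    (hIsq : ∃ x ∈ I, ∃ y ∈ I, x * y ≠ 0)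
    (x : R) (hxI : x ∈ I) (hx0 : x ≠ 0) (hxc : ∀ y : R, x * y = y * x) :
    ∃ e ∈ I, e ≠ 0 ∧ e * e = e ∧ ∀ y : R, e * y = y * e := by
  -- Annihilator of x intersected with I
  set A : TwoSidedIdeal R := TwoSidedIdeal.mk' {r | r ∈ I ∧ x * r = 0}
    ⟨I.zero_mem, mul_zero x⟩
    (fun {a b} ha hb => ⟨I.add_mem ha.1 hb.1, by rw [mul_add, ha.2, hb.2, add_zero]⟩)
    (fun {a} ha => ⟨I.neg_mem ha.1, by rw [mul_neg, ha.2, neg_zero]⟩)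
    (fun {a b} hb => ⟨I.mul_mem_left a b hb.1, by
      rw [show x * (a * b) = a * (x * b) by rw [← mul_assoc, hxc a, mul_assoc], hb.2, mul_zero]⟩)
    (fun {a b} ha => ⟨I.mul_mem_right a b ha.1, by rw [← mul_assoc, ha.2, zero_mul]⟩)
    with hA
  have memA : ∀ r : R, r ∈ A ↔ r ∈ I ∧ x * r = 0 := fun r => by
    rw [hA, TwoSidedIdeal.mem_mk']; rfl
  have hAle : A ≤ I := fun r hr => ((memA r).mp hr).1
  have hAbot : A = ⊥ := by
    rcases hmin A hAle with h | h
    · exact h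
    · exfalso
      obtain ⟨a, haI, b, hbI, hab⟩ := hIsq
      -- everything in I is killed by x; but first show I = xR to kill I²
      -- simpler: from A = I, x * r = 0 for all r ∈ I.
      have hkill : ∀ r ∈ I, x * r = 0 := fun r hr => ((memA r).mp (h ▸ hr)).2
      -- consider ideal xR ≤ I; x ∈ xR nonzero so xR = I; then a = x*s, a*b = x*(s*b) = 0.
      set X : TwoSidedIdeal R := TwoSidedIdeal.mk' {r | ∃ s : R, r = x * s}
        ⟨0, (mul_zero x).symm⟩
        (fun {a b} ⟨s, hs⟩ ⟨t, ht⟩ => ⟨s + t, by rw [hs, ht, mul_add]⟩)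
        (fun {a} ⟨s, hs⟩ => ⟨-s, by rw [hs, mul_neg]⟩)
        (fun {a b} ⟨s, hs⟩ => ⟨a * s, by rw [hs, ← mul_assoc, ← hxc a, mul_assoc]⟩)
        (fun {a b} ⟨s, hs⟩ => ⟨s * b, by rw [hs, mul_assoc]⟩)
        with hX
      have memX : ∀ r : R, r ∈ X ↔ ∃ s : R, r = x * s := fun r => by
        rw [hX, TwoSidedIdeal.mem_mk']; rfl
      have hXle : X ≤ I := fun r hr => by
        obtain ⟨s, hs⟩ := (memX r).mp hr
        rw [hs]; exact I.mul_mem_right x s hxI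
      rcases hmin X hXle with hX0 | hXI
      · have : x ∈ X := (memX x).mpr ⟨1, (mul_one x).symm⟩
        exact hx0 ((TwoSidedIdeal.mem_bot _).mp (hX0 ▸ this))
      · obtain ⟨s, hs⟩ := (memX a).mp (hXI ▸ haI)
        apply hab
        rw [hs, mul_assoc]
        exact hkill (s * b) (I.mul_mem_left s b hbI)
  have hann : ∀ r ∈ I, x * r = 0 → r = 0 := fun r hr h0 =>
    (TwoSidedIdeal.mem_bot _).mp (hAbot ▸ (memA r).mpr ⟨hr, h0⟩)
  -- ideal x*I
  set Y : TwoSidedIdeal R := TwoSidedIdeal.mk' {r | ∃ s ∈ I, r = x * s}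
    ⟨0, I.zero_mem, (mul_zero x).symm⟩
    (fun {a b} ⟨s, hsI, hs⟩ ⟨t, htI, ht⟩ =>
      ⟨s + t, I.add_mem hsI htI, by rw [hs, ht, mul_add]⟩)
    (fun {a} ⟨s, hsI, hs⟩ => ⟨-s, I.neg_mem hsI, by rw [hs, mul_neg]⟩)
    (fun {a b} ⟨s, hsI, hs⟩ => ⟨a * s, I.mul_mem_left a s hsI, by
      rw [hs, ← mul_assoc, ← hxc a, mul_assoc]⟩)
    (fun {a b} ⟨s, hsI, hs⟩ => ⟨s * b, I.mul_mem_right s b hsI, by rw [hs, mul_assoc]⟩)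
    with hY
  have memY : ∀ r : R, r ∈ Y ↔ ∃ s ∈ I, r = x * s := fun r => by
    rw [hY, TwoSidedIdeal.mem_mk']; rfl
  have hYle : Y ≤ I := fun r hr => by
    obtain ⟨s, _, hs⟩ := (memY r).mp hr
    rw [hs]; exact I.mul_mem_right x s hxI
  have hYI : Y = I := by
    rcases hmin Y hYle with hY0 | hYI
    · exfalso
      have hx2 : x * x ≠ 0 := fun h => hx0 (hann x hxI h)
      exact hx2 ((TwoSidedIdeal.mem_bot _).mp (hY0 ▸ (memY (x * x)).mpr ⟨x, hxI, rfl⟩))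
    · exact hYI
  obtain ⟨e, heI, he⟩ := (memY x).mp (hYI ▸ hxI)
  refine ⟨e, heI, ?_, ?_, ?_⟩
  · intro h; rw [h, mul_zero] at he; exact hx0 he
  · have h2 := hann (e * e - e) (I.sub_mem (I.mul_mem_left e e heI) heI)
      (by rw [mul_sub, ← mul_assoc, ← he, ← he, sub_self])
    exact sub_eq_zero.mp h2
  · intro y
    have : e * y - y * e ∈ I :=
      I.sub_mem (I.mul_mem_right e y heI) (I.mul_mem_left y e heI)
    have h0 : x * (e * y - y * e) = 0 := by
      rw [mul_sub, ← mul_assoc, ← he, show x * (y * e) = y * (x * e) by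
        rw [← mul_assoc, hxc y, mul_assoc], ← he, hxc y, sub_self]
    exact sub_eq_zero.mp (hann _ this h0)

/-- Let `I` be a minimal nonzero two-sided ideal of a ring `R` with
`I·I ≠ 0`.  TFAE: (1) `I ∩ Z(R) ≠ {0}`; (2) `I` contains a nonzero central idempotent;
(3) `I` is a direct summand of `R` as two-sided ideals. -/
theorem stmt12 {R : Type*} [Ring R] (I : TwoSidedIdeal R) (hI : I ≠ ⊥)
    (hmin : ∀ J : TwoSidedIdeal R, J ≤ I → J = ⊥ ∨ J = I)
    (hIsq : ∃ x ∈ I, ∃ y ∈ I, x * y ≠ 0) :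
    ((∃ x ∈ I, x ≠ 0 ∧ ∀ y : R, x * y = y * x) ↔
      (∃ e ∈ I, e ≠ 0 ∧ e * e = e ∧ ∀ y : R, e * y = y * e)) ∧
    ((∃ e ∈ I, e ≠ 0 ∧ e * e = e ∧ ∀ y : R, e * y = y * e) ↔
      (∃ J : TwoSidedIdeal R, (∀ x : R, x ∈ I → x ∈ J → x = 0) ∧
        ∀ r : R, ∃ i ∈ I, ∃ j ∈ J, r = i + j)) := by
  constructor
  · constructor
    · rintro ⟨x, hxI, hx0, hxc⟩
      exact central_to_idem I hmin hIsq x hxI hx0 hxc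
    · rintro ⟨e, heI, he0, _, hec⟩
      exact ⟨e, heI, he0, hec⟩
  · constructor
    · rintro ⟨e, heI, he0, hee, hec⟩
      -- J = { r | e * r = 0 }
      set J : TwoSidedIdeal R := TwoSidedIdeal.mk' {r | e * r = 0}
        (mul_zero e)
        (fun {a b} ha hb => by rw [Set.mem_setOf_eq] at *; rw [mul_add, ha, hb, add_zero])
        (fun {a} ha => by rw [Set.mem_setOf_eq] at *; rw [mul_neg, ha, neg_zero])
        (fun {a b} hb => by
          rw [Set.mem_setOf_eq] at *
          rw [show e * (a * b) = a * (e * b) by rw [← mul_assoc, hec a, mul_assoc], hb, mul_zero])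
        (fun {a b} ha => by rw [Set.mem_setOf_eq] at *; rw [← mul_assoc, ha, zero_mul])
        with hJ
      have memJ : ∀ r : R, r ∈ J ↔ e * r = 0 := fun r => by
        rw [hJ, TwoSidedIdeal.mem_mk']; rfl
      refine ⟨J, ?_, ?_⟩
      · intro y hyI hyJ
        -- K = {y ∈ I : e * y = 0} ideal ≤ I, = ⊥ or I; if I then e*e = 0, contra
        set K : TwoSidedIdeal R := TwoSidedIdeal.mk' {r | r ∈ I ∧ e * r = 0}
          ⟨I.zero_mem, mul_zero e⟩
          (fun {a b} ha hb => ⟨I.add_mem ha.1 hb.1, by rw [mul_add, ha.2, hb.2, add_zero]⟩)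
          (fun {a} ha => ⟨I.neg_mem ha.1, by rw [mul_neg, ha.2, neg_zero]⟩)
          (fun {a b} hb => ⟨I.mul_mem_left a b hb.1, by
            rw [show e * (a * b) = a * (e * b) by rw [← mul_assoc, hec a, mul_assoc],
              hb.2, mul_zero]⟩)
          (fun {a b} ha => ⟨I.mul_mem_right a b ha.1, by rw [← mul_assoc, ha.2, zero_mul]⟩)
          with hK
        have memK : ∀ r : R, r ∈ K ↔ r ∈ I ∧ e * r = 0 := fun r => by
          rw [hK, TwoSidedIdeal.mem_mk']; rfl
        rcases hmin K (fun r hr => ((memK r).mp hr).1) with hK0 | hKI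
        · exact (TwoSidedIdeal.mem_bot _).mp
            (hK0 ▸ (memK y).mpr ⟨hyI, (memJ y).mp hyJ⟩)
        · exfalso
          exact he0 (by have := ((memK e).mp (hKI ▸ heI)).2; rwa [hee] at this)
      · intro r
        refine ⟨e * r, I.mul_mem_right e r heI, r - e * r, (memJ _).mpr ?_, by abel⟩
        rw [mul_sub, ← mul_assoc, hee, sub_self]
    · rintro ⟨J, hdisj, hsum⟩
      obtain ⟨e, heI, f, hfJ, hef⟩ := hsum 1
      -- e acts as identity on I
      have hleft : ∀ y ∈ I, e * y = y := by
        intro y hy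
        have h1 : f * y = y - e * y := by
          have : (e + f) * y = y := by rw [← hef, one_mul]
          rw [add_mul] at this; exact eq_sub_of_add_eq' this
        have hIm : f * y ∈ I := by rw [h1]; exact I.sub_mem hy (I.mul_mem_left e y hy)
        have hJm : f * y ∈ J := J.mul_mem_right f y hfJ
        have h2 := hdisj _ hIm hJm
        rw [h2] at h1
        exact (sub_eq_zero.mp h1.symm).symm
      have hright : ∀ y ∈ I, y * e = y := by
        intro y hy
        have h1 : y * f = y - y * e := by
          have : y * (e + f) = y := by rw [← hef, mul_one]
          rw [mul_add] at this; exact eq_sub_of_add_eq' this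
        have hIm : y * f ∈ I := by rw [h1]; exact I.sub_mem hy (I.mul_mem_right y e hy)
        have hJm : y * f ∈ J := J.mul_mem_left y f hfJ
        have h2 := hdisj _ hIm hJm
        rw [h2] at h1
        exact (sub_eq_zero.mp h1.symm).symm
      obtain ⟨x, hxI, hx0⟩ := (ne_bot_iff' I).mp hI
      refine ⟨e, heI, ?_, hleft e heI, ?_⟩
      · intro h
        apply hx0
        rw [← hleft x hxI, h, zero_mul]
      · intro y
        obtain ⟨i, hiI, j, hjJ, hij⟩ := hsum y
        have hej : e * j = 0 := by
          have hIm : e * j ∈ I := I.mul_mem_right e j heI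
          have hJm : e * j ∈ J := J.mul_mem_left e j hjJ
          exact hdisj _ hIm hJm
        have hje : j * e = 0 := by
          have hIm : j * e ∈ I := I.mul_mem_left j e heI
          have hJm : j * e ∈ J := J.mul_mem_right j e hjJ
          exact hdisj _ hIm hJm
        rw [hij, mul_add, add_mul, hej, hje, hleft i hiI, hright i hiI]
end

section
/- Let R be a prime ring which is subdirectly irreducible with little ideal I (i.e., I is a nonzero two-sided ideal of R contained in every nonzero two-sided ideal of R). Then I ∩ Z(R) ≠ {0} if and only if R is a simple ring. -/
/-- Let `R` be a prime ring which is subdirectly irreducible with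
little ideal `I`.  Then `I ∩ Z(R) ≠ {0}` iff `R` is a simple ring. -/
theorem stmt13 {R : Type*} [Ring R] (hprime : IsPrimeRing R)
    (I : TwoSidedIdeal R) (hI : I ≠ ⊥)
    (hlittle : ∀ J : TwoSidedIdeal R, J ≠ ⊥ → I ≤ J) :
    (∃ x ∈ I, x ≠ 0 ∧ ∀ y : R, x * y = y * x) ↔
      ((0 : R) ≠ 1 ∧ ∀ J : TwoSidedIdeal R, J = ⊥ ∨ J = ⊤) := by
  constructor
  · rintro ⟨c, hcI, hc0, hcZ⟩
    -- c is regular: c * a = 0 → a = 0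
    have hreg : ∀ a : R, c * a = 0 → a = 0 := by
      intro a ha
      rcases hprime c a (fun x => by rw [hcZ x, mul_assoc, ha, mul_zero]) with h | h
      · exact absurd h hc0
      · exact h
    -- the ideal c • I
    set cI : TwoSidedIdeal R := TwoSidedIdeal.mk' {r : R | ∃ i ∈ I, r = c * i}
      ⟨0, I.zero_mem, (mul_zero c).symm⟩
      (by rintro x y ⟨i, hi, rfl⟩ ⟨j, hj, rfl⟩; exact ⟨i + j, I.add_mem hi hj, (mul_add c i j).symm⟩)
      (by rintro x ⟨i, hi, rfl⟩; exact ⟨-i, I.neg_mem hi, (mul_neg c i).symm⟩)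
      (by rintro x y ⟨i, hi, rfl⟩
          exact ⟨x * i, I.mul_mem_left x i hi, by rw [← mul_assoc, ← hcZ x, mul_assoc]⟩)
      (by rintro x y ⟨i, hi, rfl⟩; exact ⟨i * y, I.mul_mem_right i y hi, mul_assoc c i y⟩)
      with hcIdef
    have hcc : c * c ≠ 0 := fun h => hc0 (hreg c h)
    have hcIne : cI ≠ ⊥ := by
      intro h
      have : c * c ∈ cI := by rw [hcIdef, TwoSidedIdeal.mem_mk']; exact ⟨c, hcI, rfl⟩
      rw [h, TwoSidedIdeal.mem_bot] at this
      exact hcc this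
    have hle := hlittle cI hcIne
    have : c ∈ cI := hle hcI
    rw [hcIdef, TwoSidedIdeal.mem_mk'] at this
    obtain ⟨i, hi, hci⟩ := this
    have h1 : (1 : R) ∈ I := by
      have : c * (i - 1) = 0 := by rw [mul_sub, ← hci, mul_one, sub_self]
      have := hreg _ this
      have : i = 1 := by rwa [sub_eq_zero] at this
      exact this ▸ hi
    have hItop : I = ⊤ := TwoSidedIdeal.eq_top I h1
    constructor
    · intro h01
      apply hc0
      calc c = c * 1 := (mul_one c).symm
        _ = c * 0 := by rw [h01]
        _ = 0 := mul_zero c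
    · intro J
      by_cases hJ : J = ⊥
      · exact Or.inl hJ
      · exact Or.inr (TwoSidedIdeal.eq_top J ((hlittle J hJ) (hItop ▸ trivial)))
  · rintro ⟨h01, hsimp⟩
    rcases hsimp I with h | h
    · exact absurd h hI
    · exact ⟨1, h ▸ trivial, Ne.symm h01, fun y => by rw [one_mul, mul_one]⟩
end

section
/- Let S be a ring, R a maximal subring of S, and I a nonzero two-sided ideal of S with R ∩ I = {0}. Then S is a central extension of R if and only if C_I(R) = {x ∈ I : xr = rx for all r ∈ R} is nonzero. Moreover, C_I(R) ⊆ Z(S), the center of S. -/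
/-- `S` is a central extension of its subring `R`: `S` is generated as a left
`R`-module by the centralizer `C_S(R)`, i.e. every element of `S` is a finite sum of
products `r·c` with `r ∈ R` and `c` centralizing `R`. -/
def IsCentralExtension {S : Type*} [Ring S] (R : Subring S) : Prop :=
  AddSubgroup.closure
    {s : S | ∃ r ∈ R, ∃ c : S, (∀ x ∈ R, c * x = x * c) ∧ s = r * c} = ⊤

/-!
Since `R ∩ I = 0`, every nonzero `x ∈ I` lies outside `R`, so maximality forces any subring
containing `R` and such an `x` to be all of `S`. Applied to the centralizer of `x`, this makes
every `x ∈ C_I(R)` central; applied to `R + I`, it gives `S = R + I`. Writing an element `c` of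
`C_S(R)` as `a + y`, the commutator `[y, r] = [r, a]` lies in `R ∩ I = 0`, so `y ∈ C_I(R)`.
Hence if `C_I(R) = 0` then `C_S(R) ⊆ R` and `S` cannot be a central extension of `R`.
Conversely, the `R`-span of `C_S(R)` is a subring containing `R` and any nonzero `x ∈ C_I(R)`,
hence is `S`.
-/

section

variable {S : Type*} [Ring S] {R : Subring S}

def centralProducts (R : Subring S) : Set S :=
  {s : S | ∃ r ∈ R, ∃ c : S, (∀ x ∈ R, c * x = x * c) ∧ s = r * c}

theorem subset_centralProducts : (R : Set S) ⊆ centralProducts R :=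
  fun r hr => ⟨r, hr, 1, by simp, (mul_one r).symm⟩

theorem mem_centralProducts_of_commute {c : S} (hc : ∀ x ∈ R, c * x = x * c) :
    c ∈ centralProducts R :=
  ⟨1, R.one_mem, c, hc, (one_mul c).symm⟩

theorem mul_mem_centralProducts {a b : S} (ha : a ∈ centralProducts R)
    (hb : b ∈ centralProducts R) : a * b ∈ centralProducts R := by
  obtain ⟨r, hr, c, hc, rfl⟩ := ha
  obtain ⟨r', hr', c', hc', rfl⟩ := hb
  refine ⟨r * r', R.mul_mem hr hr', c * c', fun x hx => ?_, ?_⟩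
  · rw [mul_assoc, hc' x hx, ← mul_assoc, hc x hx, mul_assoc]
  · rw [mul_assoc, ← mul_assoc c r' c', hc r' hr', mul_assoc, mul_assoc]

def centralProductsSubmonoid (R : Subring S) : Submonoid S where
  carrier := centralProducts R
  mul_mem' := mul_mem_centralProducts
  one_mem' := mem_centralProducts_of_commute (by simp)

theorem isCentralExtension_iff_closure_eq_top :
    IsCentralExtension R ↔ Subring.closure (centralProducts R) = ⊤ := by
  have hmon : Submonoid.closure (centralProducts R) = centralProductsSubmonoid R :=
    Submonoid.closure_eq (centralProductsSubmonoid R)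
  change AddSubgroup.closure (centralProducts R) = ⊤ ↔ _
  rw [AddSubgroup.eq_top_iff', Subring.eq_top_iff']
  simp only [Subring.mem_closure_iff, hmon]
  rfl

theorem commute_of_add_commute {I : TwoSidedIdeal S}
    (hRI : ∀ x : S, x ∈ R → x ∈ I → x = 0) {a y : S} (ha : a ∈ R) (hy : y ∈ I)
    (hc : ∀ r ∈ R, (a + y) * r = r * (a + y)) : ∀ r ∈ R, y * r = r * y := by
  intro r hr
  have hcomm : y * r - r * y = r * a - a * r := by
    have := hc r hr
    rw [add_mul, mul_add] at this
    rw [sub_eq_sub_iff_add_eq_add, add_comm (y * r)]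
    exact this
  have hmemI : y * r - r * y ∈ I := I.sub_mem (I.mul_mem_right _ _ hy) (I.mul_mem_left _ _ hy)
  have hmemR : y * r - r * y ∈ R := hcomm ▸ R.sub_mem (R.mul_mem hr ha) (R.mul_mem ha hr)
  exact sub_eq_zero.mp (hRI _ hmemR hmemI)

namespace IsMaximalSubring

theorem eq_top_of_le_of_mem_of_notMem (hmax : IsMaximalSubring R) {T : Subring S}
    (hRT : R ≤ T) {x : S} (hxT : x ∈ T) (hxR : x ∉ R) : T = ⊤ :=
  (hmax.2 T hRT).resolve_left (by rintro rfl; exact hxR hxT)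

theorem commute_of_commute_of_notMem (hmax : IsMaximalSubring R) {x : S}
    (hxR : ∀ r ∈ R, x * r = r * x) (hx : x ∉ R) (s : S) : x * s = s * x := by
  have hRC : R ≤ Subring.centralizer {x} := fun r hr =>
    Subring.mem_centralizer_iff.2 fun g hg => (Set.mem_singleton_iff.1 hg) ▸ hxR r hr
  have hxC : x ∈ Subring.centralizer {x} :=
    Subring.mem_centralizer_iff.2 fun g hg => (Set.mem_singleton_iff.1 hg) ▸ rfl
  have hs : s ∈ Subring.centralizer {x} :=
    hmax.eq_top_of_le_of_mem_of_notMem hRC hxC hx ▸ Subring.mem_top s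
  exact Subring.mem_centralizer_iff.1 hs x rfl

/-- The subring `R + I` is the preimage of the image of `R` in `S ⧸ I`. -/
theorem exists_eq_add (hmax : IsMaximalSubring R) {I : TwoSidedIdeal S} (hI : I ≠ ⊥)
    (hRI : ∀ x : S, x ∈ R → x ∈ I → x = 0) (s : S) : ∃ r ∈ R, ∃ y ∈ I, s = r + y := by
  obtain ⟨z, hzI, hz0⟩ : ∃ z ∈ I, z ≠ 0 := by
    by_contra! h
    exact hI (eq_bot_iff.2 fun z hz => h z hz)
  let f := I.ringCon.mk'
  have hle : R ≤ (R.map f).comap f := fun r hr => Subring.mem_comap.2 ⟨r, hr, rfl⟩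
  have hzT : z ∈ (R.map f).comap f :=
    Subring.mem_comap.2 ⟨0, R.zero_mem, I.ringCon.eq.2 <| (I.rel_iff _ _).2 (by simpa using hzI)⟩
  have htop := hmax.eq_top_of_le_of_mem_of_notMem hle hzT fun hzR => hz0 (hRI z hzR hzI)
  obtain ⟨r, hr, hrs⟩ := Subring.mem_map.1 (Subring.mem_comap.1 (htop ▸ Subring.mem_top s))
  refine ⟨r, hr, s - r, ?_, (add_sub_cancel r s).symm⟩
  simpa using I.neg_mem ((I.rel_iff r s).1 (I.ringCon.eq.1 hrs))

theorem mem_of_commute (hmax : IsMaximalSubring R) {I : TwoSidedIdeal S} (hI : I ≠ ⊥)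
    (hRI : ∀ x : S, x ∈ R → x ∈ I → x = 0)
    (hCI : ∀ y ∈ I, (∀ r ∈ R, y * r = r * y) → y = 0)
    {c : S} (hc : ∀ r ∈ R, c * r = r * c) : c ∈ R := by
  obtain ⟨a, ha, y, hy, rfl⟩ := hmax.exists_eq_add hI hRI c
  rw [hCI y hy (commute_of_add_commute hRI ha hy hc), add_zero]
  exact ha

end IsMaximalSubring

end

/-- Let `R` be a maximal subring of `S` and `I` a nonzero two-sided
ideal of `S` with `R ∩ I = {0}`.  Then `S` is a central extension of `R` iff
`C_I(R) = {x ∈ I : xr = rx, ∀ r ∈ R} ≠ {0}`; moreover `C_I(R) ⊆ Z(S)`. -/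
theorem stmt14 {S : Type*} [Ring S] (R : Subring S) (hmax : IsMaximalSubring R)
    (I : TwoSidedIdeal S) (hI : I ≠ ⊥)
    (hRI : ∀ x : S, x ∈ R → x ∈ I → x = 0) :
    (IsCentralExtension R ↔ ∃ x ∈ I, x ≠ 0 ∧ ∀ r ∈ R, x * r = r * x) ∧
    (∀ x ∈ I, (∀ r ∈ R, x * r = r * x) → ∀ s : S, x * s = s * x) := by
  refine ⟨⟨fun hce => by_contra fun hne => ?_, fun ⟨x, hxI, hx0, hxR⟩ => ?_⟩,
    fun x hxI hxR s => ?_⟩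
  · have hCI : ∀ y ∈ I, (∀ r ∈ R, y * r = r * y) → y = 0 :=
      fun y hy hyR => by_contra fun hy0 => hne ⟨y, hy, hy0, hyR⟩
    have hsub : centralProducts R ⊆ R := by
      rintro _ ⟨r, hr, c, hc, rfl⟩
      exact R.mul_mem hr (hmax.mem_of_commute hI hRI hCI hc)
    apply hmax.1
    rw [isCentralExtension_iff_closure_eq_top] at hce
    exact top_le_iff.1 (hce ▸ (Subring.closure_le.2 hsub))
  · exact isCentralExtension_iff_closure_eq_top.2 <|
      hmax.eq_top_of_le_of_mem_of_notMem (subset_centralProducts.trans Subring.subset_closure)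
        (Subring.subset_closure (mem_centralProducts_of_commute hxR)) fun h => hx0 (hRI x h hxI)
  · by_cases hx0 : x = 0
    · simp [hx0]
    · exact hmax.commute_of_commute_of_notMem hxR (fun h => hx0 (hRI x h hxI)) s
end

section
/- Let S be a ring, R a maximal subring of S, and I a nonzero two-sided ideal of S with R ∩ I = {0}. Then S is a central extension of R if and only if I is isomorphic to R/ann_R(I) as an (R,R)-bimodule, i.e., there is an additive bijection Φ : R/ann_R(I) → I satisfying Φ(r̄·x̄) = r·Φ(x̄) and Φ(x̄·r̄) = Φ(x̄)·r for all r, x ∈ R, where r̄ denotes the image of r in R/ann_R(I). In particular, if S is a central extension of R, then ann_R(I) is a maximal two-sided ideal of R. -/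
/-- Auxiliary: `R + A` is a subring when `A` is an additive subgroup closed under
the relevant multiplications. -/
lemma exists_subring_add' {S : Type*} [Ring S] (R : Subring S) (A : Set S)
    (h0 : (0:S) ∈ A) (hadd : ∀ a ∈ A, ∀ b ∈ A, a + b ∈ A) (hneg : ∀ a ∈ A, -a ∈ A)
    (hRA : ∀ r ∈ R, ∀ a ∈ A, r * a ∈ A) (hAR : ∀ a ∈ A, ∀ r ∈ R, a * r ∈ A)
    (hAA : ∀ a ∈ A, ∀ b ∈ A, a * b ∈ A) :
    ∃ T : Subring S, ∀ s : S, s ∈ T ↔ ∃ r ∈ R, ∃ a ∈ A, s = r + a := by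
  refine ⟨{
    carrier := {s : S | ∃ r ∈ R, ∃ a ∈ A, s = r + a}
    zero_mem' := ⟨0, R.zero_mem, 0, h0, (add_zero 0).symm⟩
    one_mem' := ⟨1, R.one_mem, 0, h0, (add_zero 1).symm⟩
    add_mem' := fun {x y} hx hy => by
      obtain ⟨r1, hr1, a1, ha1, rfl⟩ := hx
      obtain ⟨r2, hr2, a2, ha2, rfl⟩ := hy
      exact ⟨r1 + r2, R.add_mem hr1 hr2, a1 + a2, hadd _ ha1 _ ha2, by abel⟩
    neg_mem' := fun {x} hx => by
      obtain ⟨r1, hr1, a1, ha1, rfl⟩ := hx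
      exact ⟨-r1, R.neg_mem hr1, -a1, hneg _ ha1, by abel⟩
    mul_mem' := fun {x y} hx hy => by
      obtain ⟨r1, hr1, a1, ha1, rfl⟩ := hx
      obtain ⟨r2, hr2, a2, ha2, rfl⟩ := hy
      exact ⟨r1 * r2, R.mul_mem hr1 hr2,
        r1 * a2 + a1 * r2 + a1 * a2,
        hadd _ (hadd _ (hRA _ hr1 _ ha2) _ (hAR _ ha1 _ hr2)) _ (hAA _ ha1 _ ha2),
        by noncomm_ring⟩ }, fun s => Iff.rfl⟩

/-- Key structural lemma: if `S` is a central extension of `R`, there is a central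
element `d ∈ I` with `I = R⬝d` and `ann_R(d) = Z`. -/
lemma key_lemma {S : Type*} [Ring S] (R : Subring S) (hmax : IsMaximalSubring R)
    (I : TwoSidedIdeal S) (hI : I ≠ ⊥)
    (hRI : ∀ x : S, x ∈ R → x ∈ I → x = 0)
    (Z : TwoSidedIdeal R)
    (hZ : ∀ x : R, x ∈ Z ↔ ∀ i ∈ I, (x : S) * i = 0 ∧ i * (x : S) = 0)
    (hce : IsCentralExtension R) :
    ∃ d : S, d ∈ I ∧ (∀ s : S, d * s = s * d) ∧
      (∀ i ∈ I, ∃ r : R, i = (r : S) * d) ∧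
      (∀ r : R, ((r : S) * d = 0 ↔ r ∈ Z)) := by
  classical
  -- S = R + I
  have hSdec : ∀ s : S, ∃ r ∈ R, ∃ i ∈ I, s = r + i := by
    obtain ⟨T, hT⟩ := exists_subring_add' R (I : Set S) I.zero_mem
      (fun a ha b hb => I.add_mem ha hb) (fun a ha => I.neg_mem ha)
      (fun r _ a ha => I.mul_mem_left r a ha) (fun a ha r _ => I.mul_mem_right a r ha)
      (fun a ha b _ => I.mul_mem_right a b ha)
    have hRT : R ≤ T := fun r hr => (hT r).2 ⟨r, hr, 0, I.zero_mem, (add_zero r).symm⟩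
    rcases hmax.2 T hRT with h | h
    · exfalso
      apply hI
      refine le_antisymm (fun x hx => ?_) bot_le
      have hxT : x ∈ T := (hT x).2 ⟨0, R.zero_mem, x, hx, (zero_add x).symm⟩
      rw [h] at hxT
      exact (TwoSidedIdeal.mem_bot S).2 (hRI x hxT hx)
    · intro s
      have : s ∈ T := h ▸ Subring.mem_top s
      obtain ⟨r, hr, i, hi, rfl⟩ := (hT s).1 this
      exact ⟨r, hr, i, hi, rfl⟩
  -- there is a nonzero element of I centralizing R
  obtain ⟨d, hdI, hd0, hdRcomm⟩ :
      ∃ d : S, d ∈ I ∧ d ≠ 0 ∧ ∀ x ∈ R, d * x = x * d := by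
    by_contra hcon
    push_neg at hcon
    -- every centralizing element lies in R
    have hCR : ∀ c : S, (∀ x ∈ R, c * x = x * c) → c ∈ R := by
      intro c hc
      obtain ⟨r, hr, i, hi, rfl⟩ := hSdec c
      have hicomm : ∀ x ∈ R, i * x = x * i := by
        intro x hx
        have h1 : i * x - x * i = x * r - r * x := by
          have h := hc x hx
          rw [add_mul, mul_add] at h
          calc i * x - x * i = (r * x + i * x) - (r * x + x * i) := by abel
            _ = (x * r + x * i) - (r * x + x * i) := by rw [h]
            _ = x * r - r * x := by abel
        have h2 : i * x - x * i ∈ I :=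
          I.sub_mem (I.mul_mem_right i x hi) (I.mul_mem_left x i hi)
        have h3 : i * x - x * i ∈ R := by
          rw [h1]; exact R.sub_mem (R.mul_mem hx hr) (R.mul_mem hr hx)
        have := hRI _ h3 h2
        rwa [sub_eq_zero] at this
      have hi0 : i = 0 := by
        by_contra hne
        obtain ⟨x, hx, hxne⟩ := hcon i hi hne
        exact hxne (hicomm x hx)
      rw [hi0, add_zero]; exact hr
    -- then the generating set lies in R, so R = ⊤
    apply hmax.1
    rw [Subring.eq_top_iff']
    intro s
    have hcl : AddSubgroup.closure
        {s : S | ∃ r ∈ R, ∃ c : S, (∀ x ∈ R, c * x = x * c) ∧ s = r * c}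
        ≤ R.toAddSubgroup := by
      apply (AddSubgroup.closure_le _).2
      rintro t ⟨r, hr, c, hc, rfl⟩
      exact R.mul_mem hr (hCR c hc)
    have : s ∈ AddSubgroup.closure
        {s : S | ∃ r ∈ R, ∃ c : S, (∀ x ∈ R, c * x = x * c) ∧ s = r * c} := by
      rw [hce]; trivial
    exact hcl this
  -- d is central in S
  have hdS : ∀ s : S, d * s = s * d := by
    have htop : Subring.closure ((R : Set S) ∪ {d}) = ⊤ := by
      have hle : R ≤ Subring.closure ((R : Set S) ∪ {d}) :=
        fun x hx => Subring.subset_closure (Or.inl hx)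
      rcases hmax.2 _ hle with h | h
      · exfalso
        have : d ∈ Subring.closure ((R : Set S) ∪ {d}) :=
          Subring.subset_closure (Or.inr rfl)
        rw [h] at this
        exact hd0 (hRI d this hdI)
      · exact h
    intro s
    have hs : s ∈ Subring.closure ((R : Set S) ∪ {d}) := by
      rw [htop]; exact Subring.mem_top s
    have hle : Subring.closure ((R : Set S) ∪ {d}) ≤ Subring.centralizer {d} := by
      apply Subring.closure_le.2
      rintro x (hx | hx)
      · exact Subring.mem_centralizer_iff.2 (by
          rintro g rfl
          exact hdRcomm x hx)
      · rw [Set.mem_singleton_iff] at hx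
        subst hx
        exact Subring.mem_centralizer_iff.2 (by rintro g rfl; rfl)
    exact Subring.mem_centralizer_iff.1 (hle hs) d rfl
  have hd2S : ∀ s : S, (d * d) * s = s * (d * d) := by
    intro s
    calc (d * d) * s = d * (d * s) := mul_assoc d d s
      _ = d * (s * d) := by rw [hdS s]
      _ = (d * s) * d := (mul_assoc d s d).symm
      _ = (s * d) * d := by rw [hdS s]
      _ = s * (d * d) := mul_assoc s d d
  -- the annihilator subring R + ann_S(d)
  obtain ⟨TA, hTA⟩ := exists_subring_add' R {s : S | s * d = 0}
    (by simp) (fun a ha b hb => by simp only [Set.mem_setOf_eq] at *; rw [add_mul, ha, hb, add_zero])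
    (fun a ha => by simp only [Set.mem_setOf_eq] at *; rw [neg_mul, ha, neg_zero])
    (fun r _ a ha => by simp only [Set.mem_setOf_eq] at *; rw [mul_assoc, ha, mul_zero])
    (fun a ha r _ => by
      simp only [Set.mem_setOf_eq] at *
      rw [mul_assoc, ← hdS r, ← mul_assoc, ha, zero_mul])
    (fun a _ b hb => by simp only [Set.mem_setOf_eq] at *; rw [mul_assoc, hb, mul_zero])
  have hRTA : R ≤ TA := fun r hr => (hTA r).2 ⟨r, hr, 0, by simp, (add_zero r).symm⟩
  rcases hmax.2 TA hRTA with hA | hA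
  · -- ann_S(d) ⊆ R : impossible
    exfalso
    have hAsubR : ∀ a : S, a * d = 0 → a ∈ R := by
      intro a ha
      have : a ∈ TA := (hTA a).2 ⟨0, R.zero_mem, a, ha, (zero_add a).symm⟩
      rwa [hA] at this
    have hddI : d * d ∈ I := I.mul_mem_left d d hdI
    by_cases hdd : ∀ s : S, s * (d * d) = 0
    · -- then d * d = 0, so d ∈ R, so d = 0
      have : d * d = 0 := by simpa using hdd 1
      exact hd0 (hRI d (hAsubR d this) hdI)
    · push_neg at hdd
      obtain ⟨s₀, hs₀⟩ := hdd
      -- subring R + S(d*d)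
      obtain ⟨TB, hTB⟩ := exists_subring_add' R {x : S | ∃ s : S, x = s * (d * d)}
        ⟨0, by rw [zero_mul]⟩
        (by rintro a ⟨s1, rfl⟩ b ⟨s2, rfl⟩; exact ⟨s1 + s2, by rw [add_mul]⟩)
        (by rintro a ⟨s1, rfl⟩; exact ⟨-s1, by rw [neg_mul]⟩)
        (by rintro r _ a ⟨s1, rfl⟩; exact ⟨r * s1, by rw [mul_assoc]⟩)
        (by
          rintro a ⟨s1, rfl⟩ r _
          exact ⟨s1 * r, by rw [mul_assoc, hd2S r, ← mul_assoc]⟩)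
        (by rintro a ⟨s1, rfl⟩ b ⟨s2, rfl⟩; exact ⟨s1 * (d * d) * s2, by rw [← mul_assoc]⟩)
      have hRTB : R ≤ TB := fun r hr => (hTB r).2 ⟨r, hr, 0, ⟨0, by rw [zero_mul]⟩, (add_zero r).symm⟩
      rcases hmax.2 TB hRTB with hB | hB
      · -- S(d*d) ⊆ R forces s₀ * (d*d) = 0
        apply hs₀
        have hmem : s₀ * (d * d) ∈ TB := (hTB _).2 ⟨0, R.zero_mem, _, ⟨s₀, rfl⟩, (zero_add _).symm⟩
        rw [hB] at hmem
        exact hRI _ hmem (I.mul_mem_left s₀ _ hddI)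
      · -- d ∈ R + S(d*d)
        have hd : d ∈ TB := hB ▸ Subring.mem_top d
        obtain ⟨r, hr, a, ⟨s, rfl⟩, hds⟩ := (hTB d).1 hd
        have hrI : r ∈ I := by
          rw [eq_sub_of_add_eq hds.symm]
          exact I.sub_mem hdI (I.mul_mem_left s _ hddI)
        have hr0 : r = 0 := hRI r hr hrI
        rw [hr0, zero_add] at hds
        have hdsd : d = s * (d * d) := hds
        have h1sd : (1 - s * d) * d = 0 := by
          rw [sub_mul, one_mul, mul_assoc, ← hdsd, sub_self]
        have hsdR : s * d ∈ R := by
          have h1 : (1 : S) - (1 - s * d) = s * d := by abel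
          have := R.sub_mem R.one_mem (hAsubR _ h1sd)
          rwa [h1] at this
        have hsd0 : s * d = 0 := hRI _ hsdR (I.mul_mem_left s d hdI)
        apply hd0
        rw [hdsd, ← mul_assoc, hsd0, zero_mul]
  · -- main case : S = R + ann_S(d); then I = R·d
    have hId : ∀ i ∈ I, ∃ r : R, i = (r : S) * d := by
      -- first, I = S·d
      have hISd : ∀ i ∈ I, ∃ s : S, i = s * d := by
        obtain ⟨TC, hTC⟩ := exists_subring_add' R {x : S | ∃ s : S, x = s * d}
          ⟨0, by rw [zero_mul]⟩
          (by rintro a ⟨s1, rfl⟩ b ⟨s2, rfl⟩; exact ⟨s1 + s2, by rw [add_mul]⟩)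
          (by rintro a ⟨s1, rfl⟩; exact ⟨-s1, by rw [neg_mul]⟩)
          (by rintro r _ a ⟨s1, rfl⟩; exact ⟨r * s1, by rw [mul_assoc]⟩)
          (by
            rintro a ⟨s1, rfl⟩ r _
            exact ⟨s1 * r, by rw [mul_assoc, hdS r, ← mul_assoc]⟩)
          (by rintro a ⟨s1, rfl⟩ b ⟨s2, rfl⟩; exact ⟨s1 * d * s2, by rw [← mul_assoc]⟩)
        have hRTC : R ≤ TC := fun r hr => (hTC r).2 ⟨r, hr, 0, ⟨0, by rw [zero_mul]⟩, (add_zero r).symm⟩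
        rcases hmax.2 TC hRTC with hC | hC
        · exfalso
          have : d ∈ TC := (hTC d).2 ⟨0, R.zero_mem, d, ⟨1, by rw [one_mul]⟩, (zero_add d).symm⟩
          rw [hC] at this
          exact hd0 (hRI d this hdI)
        · intro i hi
          have : i ∈ TC := hC ▸ Subring.mem_top i
          obtain ⟨r, hr, a, ⟨s, rfl⟩, hieq⟩ := (hTC i).1 this
          have hrI : r ∈ I := by
            rw [eq_sub_of_add_eq hieq.symm]
            exact I.sub_mem hi (I.mul_mem_left s d hdI)
          have hr0 : r = 0 := hRI r hr hrI
          rw [hr0, zero_add] at hieq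
          exact ⟨s, hieq⟩
      intro i hi
      obtain ⟨s, rfl⟩ := hISd i hi
      -- s = r + a with a * d = 0
      have hsTA : s ∈ TA := hA ▸ Subring.mem_top s
      obtain ⟨r, hr, a, ha, rfl⟩ := (hTA s).1 hsTA
      refine ⟨⟨r, hr⟩, ?_⟩
      simp only [Set.mem_setOf_eq] at ha
      rw [add_mul, ha, add_zero]
    have hann : ∀ r : R, ((r : S) * d = 0 ↔ r ∈ Z) := by
      intro r
      constructor
      · intro h0
        rw [hZ]
        intro i hi
        obtain ⟨x, rfl⟩ := hId i hi
        constructor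
        · show (r : S) * ((x : S) * d) = 0
          rw [← hdS (x : S), ← mul_assoc, h0, zero_mul]
        · show ((x : S) * d) * (r : S) = 0
          rw [mul_assoc, hdS (r : S), h0, mul_zero]
      · intro hZr
        exact ((hZ r).1 hZr d hdI).1
    exact ⟨d, hdI, hdS, hId, hann⟩

/-- Let `R` be a maximal subring of `S` and `I` a nonzero two-sided
ideal of `S` with `R ∩ I = {0}`, and let `Z = ann_R(I)`.  Then `S` is a central
extension of `R` iff `I ≅ R/ann_R(I)` as `(R,R)`-bimodules; in particular, if `S` is
a central extension of `R` then `ann_R(I)` is a maximal two-sided ideal of `R`. -/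
theorem stmt16 {S : Type*} [Ring S] (R : Subring S) (hmax : IsMaximalSubring R)
    (I : TwoSidedIdeal S) (hI : I ≠ ⊥)
    (hRI : ∀ x : S, x ∈ R → x ∈ I → x = 0)
    (Z : TwoSidedIdeal R)
    (hZ : ∀ x : R, x ∈ Z ↔ ∀ i ∈ I, (x : S) * i = 0 ∧ i * (x : S) = 0) :
    (IsCentralExtension R ↔
      ∃ Φ : Z.ringCon.Quotient → S,
        (∀ q, Φ q ∈ I) ∧
        Function.Injective Φ ∧
        (∀ x ∈ I, ∃ q, Φ q = x) ∧
        (∀ q q', Φ (q + q') = Φ q + Φ q') ∧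
        (∀ r x : R, Φ ((r : Z.ringCon.Quotient) * (x : Z.ringCon.Quotient)) =
          (r : S) * Φ (x : Z.ringCon.Quotient)) ∧
        (∀ r x : R, Φ ((x : Z.ringCon.Quotient) * (r : Z.ringCon.Quotient)) =
          Φ (x : Z.ringCon.Quotient) * (r : S))) ∧
    (IsCentralExtension R →
      Z ≠ ⊤ ∧ ∀ J : TwoSidedIdeal R, Z ≤ J → J = Z ∨ J = ⊤) := by
  classical
  -- S = R + I (needed for the converse direction)
  have hSdec : ∀ s : S, ∃ r ∈ R, ∃ i ∈ I, s = r + i := by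
    obtain ⟨T, hT⟩ := exists_subring_add' R (I : Set S) I.zero_mem
      (fun a ha b hb => I.add_mem ha hb) (fun a ha => I.neg_mem ha)
      (fun r _ a ha => I.mul_mem_left r a ha) (fun a ha r _ => I.mul_mem_right a r ha)
      (fun a ha b _ => I.mul_mem_right a b ha)
    have hRT : R ≤ T := fun r hr => (hT r).2 ⟨r, hr, 0, I.zero_mem, (add_zero r).symm⟩
    rcases hmax.2 T hRT with h | h
    · exfalso
      apply hI
      refine le_antisymm (fun x hx => ?_) bot_le
      have hxT : x ∈ T := (hT x).2 ⟨0, R.zero_mem, x, hx, (zero_add x).symm⟩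
      rw [h] at hxT
      exact (TwoSidedIdeal.mem_bot S).2 (hRI x hxT hx)
    · intro s
      have : s ∈ T := h ▸ Subring.mem_top s
      obtain ⟨r, hr, i, hi, rfl⟩ := (hT s).1 this
      exact ⟨r, hr, i, hi, rfl⟩
  constructor
  · constructor
    · -- forward direction
      intro hce
      obtain ⟨d, hdI, hdS, hId, hann⟩ := key_lemma R hmax I hI hRI Z hZ hce
      have hwd : ∀ a b : R, Z.ringCon a b → (a : S) * d = (b : S) * d := by
        intro a b hab
        rw [TwoSidedIdeal.rel_iff] at hab
        have := (hann (a - b)).2 hab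
        push_cast at this
        rw [sub_mul, sub_eq_zero] at this
        exact this
      refine ⟨fun q => Quotient.liftOn q (fun r : R => (r : S) * d) hwd, ?_, ?_, ?_, ?_, ?_, ?_⟩
      · intro q
        induction q using Quotient.inductionOn with | _ a =>
        exact I.mul_mem_left _ d hdI
      · intro q q' h
        induction q using Quotient.inductionOn with | _ a =>
        induction q' using Quotient.inductionOn with | _ b =>
        have hab : (a : S) * d = (b : S) * d := h
        have : ((a - b : R) : S) * d = 0 := by
          push_cast
          rw [sub_mul, hab, sub_self]
        exact Quotient.sound ((TwoSidedIdeal.rel_iff Z a b).2 ((hann (a - b)).1 this))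
      · intro x hx
        obtain ⟨r, rfl⟩ := hId x hx
        exact ⟨(r : Z.ringCon.Quotient), rfl⟩
      · intro q q'
        induction q using Quotient.inductionOn with | _ a =>
        induction q' using Quotient.inductionOn with | _ b =>
        exact_mod_cast add_mul (a : S) (b : S) d
      · intro r x
        show ((r * x : R) : S) * d = (r : S) * ((x : S) * d)
        push_cast
        rw [mul_assoc]
      · intro r x
        show ((x * r : R) : S) * d = ((x : S) * d) * (r : S)
        push_cast
        rw [mul_assoc, mul_assoc, ← hdS (r : S)]
    · -- converse direction
      rintro ⟨Φ, hmem, hinj, hsurj, hadd, hleft, hright⟩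
      set u := Φ ((1 : R) : Z.ringCon.Quotient) with hu_def
      have hΦcoe : ∀ x : R, Φ ((x : Z.ringCon.Quotient)) = (x : S) * u := by
        intro x
        have := hleft x 1
        rwa [← RingCon.coe_mul, mul_one] at this
      have hΦcoe' : ∀ x : R, Φ ((x : Z.ringCon.Quotient)) = u * (x : S) := by
        intro x
        have := hright x 1
        rwa [← RingCon.coe_mul, one_mul] at this
      have hucomm : ∀ x ∈ R, u * x = x * u := by
        intro x hx
        have h1 := hΦcoe ⟨x, hx⟩
        have h2 := hΦcoe' ⟨x, hx⟩
        rw [h1] at h2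
        exact h2.symm
      rw [IsCentralExtension, eq_top_iff]
      intro s _
      obtain ⟨r, hr, i, hi, rfl⟩ := hSdec s
      obtain ⟨q, hq⟩ := hsurj i hi
      obtain ⟨x, rfl⟩ := Quotient.exists_rep q
      have hxq : (x : Z.ringCon.Quotient) = ⟦x⟧ := rfl
      have hi_eq : i = (x : S) * u := by rw [← hq, ← hxq, hΦcoe]
      have h1 : r ∈ AddSubgroup.closure
          {s : S | ∃ r ∈ R, ∃ c : S, (∀ x ∈ R, c * x = x * c) ∧ s = r * c} :=
        AddSubgroup.subset_closure ⟨r, hr, 1, fun y _ => by rw [one_mul, mul_one], (mul_one r).symm⟩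
      have h2 : i ∈ AddSubgroup.closure
          {s : S | ∃ r ∈ R, ∃ c : S, (∀ x ∈ R, c * x = x * c) ∧ s = r * c} :=
        AddSubgroup.subset_closure ⟨(x : S), x.2, u, hucomm, hi_eq⟩
      exact AddSubgroup.add_mem _ h1 h2
  · -- second part : Z is a maximal two-sided ideal
    intro hce
    obtain ⟨d, hdI, hdS, hId, hann⟩ := key_lemma R hmax I hI hRI Z hZ hce
    have hd0 : d ≠ 0 := by
      intro h
      apply hI
      refine le_antisymm (fun x hx => ?_) bot_le
      obtain ⟨r, rfl⟩ := hId x hx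
      rw [h, mul_zero]
      exact (TwoSidedIdeal.mem_bot S).2 rfl
    constructor
    · intro hZtop
      have h1 : (1 : R) ∈ Z := hZtop ▸ TwoSidedIdeal.mem_top (R := R)
      have := ((hZ 1).1 h1 d hdI).1
      simp only [OneMemClass.coe_one, one_mul] at this
      exact hd0 this
    · intro J hZJ
      -- d² = w·d for some w in R
      obtain ⟨w, hw⟩ := hId (d * d) (I.mul_mem_left d d hdI)
      -- subring R + J·d
      obtain ⟨T, hT⟩ := exists_subring_add' R {x : S | ∃ j : R, j ∈ J ∧ x = (j : S) * d}
        ⟨0, J.zero_mem, by rw [ZeroMemClass.coe_zero, zero_mul]⟩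
        (by
          rintro a ⟨j1, hj1, rfl⟩ b ⟨j2, hj2, rfl⟩
          exact ⟨j1 + j2, J.add_mem hj1 hj2, by push_cast; rw [add_mul]⟩)
        (by
          rintro a ⟨j1, hj1, rfl⟩
          exact ⟨-j1, J.neg_mem hj1, by push_cast; rw [neg_mul]⟩)
        (by
          rintro r hr a ⟨j1, hj1, rfl⟩
          exact ⟨⟨r, hr⟩ * j1, J.mul_mem_left _ _ hj1, by push_cast; rw [mul_assoc]⟩)
        (by
          rintro a ⟨j1, hj1, rfl⟩ r hr
          refine ⟨j1 * ⟨r, hr⟩, J.mul_mem_right _ _ hj1, ?_⟩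
          push_cast
          rw [mul_assoc, hdS r, ← mul_assoc])
        (by
          rintro a ⟨j1, hj1, rfl⟩ b ⟨j2, hj2, rfl⟩
          refine ⟨j1 * (j2 * w), J.mul_mem_right _ _ hj1, ?_⟩
          push_cast
          calc ((j1 : S) * d) * ((j2 : S) * d)
              = (j1 : S) * (d * ((j2 : S) * d)) := by rw [mul_assoc]
            _ = (j1 : S) * (((j2 : S) * d) * d) := by rw [hdS ((j2 : S) * d)]
            _ = (j1 : S) * ((j2 : S) * (d * d)) := by rw [mul_assoc]
            _ = (j1 : S) * ((j2 : S) * ((w : S) * d)) := by rw [hw]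
            _ = (j1 : S) * ((j2 : S) * (w : S)) * d := by noncomm_ring)
      have hRT : R ≤ T := fun r hr => (hT r).2 ⟨r, hr, 0,
        ⟨0, J.zero_mem, by rw [ZeroMemClass.coe_zero, zero_mul]⟩, (add_zero r).symm⟩
      rcases hmax.2 T hRT with h | h
      · left
        refine le_antisymm (fun j hj => ?_) hZJ
        -- here j : R with hj : j ∈ J ; show j ∈ Z
        have hjd : (j : S) * d ∈ T := (hT _).2 ⟨0, R.zero_mem, _, ⟨j, hj, rfl⟩, (zero_add _).symm⟩
        rw [h] at hjd
        have : (j : S) * d = 0 := hRI _ hjd (I.mul_mem_left _ d hdI)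
        exact (hann j).1 this
      · right
        have hd : d ∈ T := h ▸ Subring.mem_top d
        obtain ⟨r, hr, a, ⟨j, hj, rfl⟩, hds⟩ := (hT d).1 hd
        have hrI : r ∈ I := by
          rw [eq_sub_of_add_eq hds.symm]
          exact I.sub_mem hdI (I.mul_mem_left _ d hdI)
        have hr0 : r = 0 := hRI r hr hrI
        rw [hr0, zero_add] at hds
        have hdjd : d = (j : S) * d := hds
        have h1j : ((1 - j : R) : S) * d = 0 := by
          push_cast
          rw [sub_mul, one_mul, ← hdjd, sub_self]
        have h1jZ : (1 - j : R) ∈ Z := (hann _).1 h1j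
        have h1J : (1 : R) ∈ J := by
          have := J.add_mem (hZJ h1jZ) hj
          rwa [sub_add_cancel] at this
        exact (TwoSidedIdeal.one_mem_iff J).1 h1J
end

section
/- Let R be a subring of a ring S, and suppose S is a central extension of R, i.e., S is generated as a left R-module by C_S(R) = {s ∈ S : sr = rs for all r ∈ R}. If S is a prime ring, then R is a prime ring; if S is a semiprime ring, then R is a semiprime ring. -/
/-- `a * s * b` is additive in `s` and, because `b ∈ R` commutes with every element of
`C_S(R)`, vanishes on each generator `r * c`: `a * (r * c) * b = (a * r * b) * c`. -/
theorem IsCentralExtension.mul_mul_eq_zero {S : Type*} [Ring S] {R : Subring S}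
    (hcentral : IsCentralExtension R) {a b : S} (hb : b ∈ R)
    (h : ∀ x ∈ R, a * x * b = 0) (s : S) : a * s * b = 0 := by
  have hle : AddSubgroup.closure
      {s : S | ∃ r ∈ R, ∃ c : S, (∀ x ∈ R, c * x = x * c) ∧ s = r * c} ≤
      ((AddMonoidHom.mulRight b).comp (AddMonoidHom.mulLeft a)).ker := by
    rw [AddSubgroup.closure_le]
    rintro _ ⟨r, hr, c, hc, rfl⟩
    change a * (r * c) * b = 0
    rw [mul_assoc, mul_assoc, hc b hb, ← mul_assoc, ← mul_assoc, h r hr, zero_mul]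
  rw [hcentral] at hle
  exact hle (AddSubgroup.mem_top s)

/-- If `S` is a central extension of a subring `R` and `S` is prime
(resp. semiprime), then `R` is prime (resp. semiprime). -/
theorem stmt17 {S : Type*} [Ring S] (R : Subring S)
    (hcentral : IsCentralExtension R) :
    (IsPrimeRing S →
      ∀ a ∈ R, ∀ b ∈ R, (∀ x ∈ R, a * x * b = 0) → a = 0 ∨ b = 0) ∧
    (IsSemiprimeRing S →
      ∀ a ∈ R, (∀ x ∈ R, a * x * a = 0) → a = 0) :=
  ⟨fun hS a _ b hb h => hS a b (hcentral.mul_mul_eq_zero hb h),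
    fun hS a ha h => hS a (hcentral.mul_mul_eq_zero ha h)⟩
end

section
/- Let k be a field. Then there exist an integer n > 1 and a division ring D which is finite-dimensional as a vector space over its center, such that the matrix ring Mₙ(D) is a minimal ring extension of k (i.e., there is an injective ring homomorphism from k into Mₙ(D) whose image is a maximal subring of Mₙ(D)), if and only if k has a proper subfield F such that k is finite-dimensional as an F-vector space. -/
/-- `Mₙ(D)` is a minimal ring extension of the field `k`, with `n > 1` and `D` a
division ring finite-dimensional over its center: there is an injective ring
homomorphism `k → Mₙ(D)` whose image is a maximal subring. -/
def IsCentrallyFiniteMatrixMinimalExt (k : Type) [Field k] (n : ℕ) (D : Type)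
    [DivisionRing D] : Prop :=
  1 < n ∧
  FiniteDimensional (Subring.center D) D ∧
  ∃ f : k →+* Matrix (Fin n) (Fin n) D,
    Function.Injective f ∧ IsMaximalSubring f.range

/-!
If `f : k → Mₙ(D)` has maximal image `A` and `n > 1`, then `A` is a commutative subring of a
noncommutative ring, so adjoining to it the centre `Z` of `Mₙ(D)` keeps it proper, and maximality
gives `Z ⊆ A`. The preimage `F` of `Z(D) ≅ Z` is then a subfield of `k`, and `k` is finite over
it since `Mₙ(D)` is finite over `Z(D)`. It is proper, for otherwise `A ⊆ Z` and adjoining a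
noncentral matrix to `A` would give a commutative subring strictly between `A` and `Mₙ(D)`.

Conversely, choose an intermediate field `E` of `k/F` maximal among proper ones. Then `k`, acting
by multiplication, is a maximal subring of `End_E(k) ≅ M_[k:E](E)`: for a subring `T ⊇ k`, the
elements of `k` commuting with `T` form an intermediate field of `k/E`. If it is `k`, every element
of `T` is `k`-linear, so `T = k`; if it is `E`, then `k` is a simple `T`-module whose
`T`-endomorphisms are the scalars `E`, and the Jacobson density theorem gives `T = End_E(k)`.
-/

namespace IsMaximalSubring

variable {R : Type*} [Ring R] {A : Subring R}

theorem subset_of_commute (hA : IsMaximalSubring A) (hR : ∃ x y : R, ¬Commute x y) {s : Set R}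
    (hAs : (A : Set R) ⊆ s) (hs : ∀ x ∈ s, ∀ y ∈ s, x * y = y * x) : s ⊆ A := by
  have : IsMulCommutative (Subring.closure s) := Subring.isMulCommutative_closure hs
  have hne : Subring.closure s ≠ ⊤ := by
    rintro htop
    obtain ⟨x, y, hxy⟩ := hR
    have hx : x ∈ Subring.closure s := htop ▸ Subring.mem_top x
    have hy : y ∈ Subring.closure s := htop ▸ Subring.mem_top y
    exact hxy (congrArg Subtype.val (this.is_comm.comm ⟨x, hx⟩ ⟨y, hy⟩))
  have hle : A ≤ Subring.closure s := fun x hx => Subring.subset_closure (hAs hx)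
  rw [← (hA.2 _ hle).resolve_right hne]
  exact Subring.subset_closure

theorem center_le (hA : IsMaximalSubring A) (hR : ∃ x y : R, ¬Commute x y)
    (hAc : ∀ x ∈ A, ∀ y ∈ A, x * y = y * x) : Subring.center R ≤ A := by
  refine fun z hz => hA.subset_of_commute hR Set.subset_union_left ?_ (Or.inr hz)
  rintro x (hx | hx) y (hy | hy)
  · exact hAc x hx y hy
  · exact Subring.mem_center_iff.mp hy x
  · exact (Subring.mem_center_iff.mp hx y).symm
  · exact (Subring.mem_center_iff.mp hx y).symm

theorem not_le_center (hA : IsMaximalSubring A) (hR : ∃ x y : R, ¬Commute x y) :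
    ¬A ≤ Subring.center R := by
  intro hAZ
  obtain ⟨x, hx⟩ : ∃ x : R, x ∉ Subring.center R := by
    obtain ⟨x, y, hxy⟩ := hR
    exact ⟨x, fun hx => hxy (Subring.mem_center_iff.mp hx y).symm⟩
  refine hx (hAZ (hA.subset_of_commute hR (Set.subset_insert x A) ?_ (Set.mem_insert x A)))
  rintro a (rfl | ha) b (rfl | hb)
  · rfl
  · exact Subring.mem_center_iff.mp (hAZ hb) a
  · exact (Subring.mem_center_iff.mp (hAZ ha) b).symm
  · exact (Subring.mem_center_iff.mp (hAZ ha) b).symm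

theorem map {S : Type*} [Ring S] (h : IsMaximalSubring A) (e : R ≃+* S) :
    IsMaximalSubring (A.map (e : R →+* S)) := by
  have hcomap_map (B : Subring R) : (B.map (e : R →+* S)).comap (e : R →+* S) = B :=
    Subring.comap_map_eq_self_of_injective e.injective B
  have hmap_comap (T : Subring S) : (T.comap (e : R →+* S)).map (e : R →+* S) = T :=
    Subring.map_comap_eq_self_of_surjective e.surjective T
  refine ⟨fun htop => h.1 ?_, fun T hT => ?_⟩
  · rw [← hcomap_map A, htop, Subring.comap_top]
  · rcases h.2 _ (Subring.map_le_iff_le_comap.mp hT) with hA | htop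
    · exact Or.inl (by rw [← hA, hmap_comap])
    · exact Or.inr (by
        rw [← hmap_comap T, htop, ← Subring.comap_top (e : R →+* S), hmap_comap])

end IsMaximalSubring

theorem Matrix.not_commute_single_single {n α : Type*} [Fintype n] [DecidableEq n]
    [NonAssocSemiring α] [Nontrivial α] {i j : n} (hij : i ≠ j) :
    ¬Commute (Matrix.single i j (1 : α)) (Matrix.single j i 1) := by
  intro h
  have := congrFun (congrFun h.eq i) i
  simp [hij] at this

theorem RingHom.exists_comp_eq_of_range_le {A k R : Type*} [Ring A] [Ring k] [Ring R]
    (f : k →+* R) (hf : Function.Injective f) (g : A →+* R) (h : g.range ≤ f.range) :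
    ∃ σ : A →+* k, f.comp σ = g := by
  let e : k ≃+* f.range := RingEquiv.ofBijective f.rangeRestrict
    ⟨fun a b hab => hf (congrArg Subtype.val hab), f.rangeRestrict_surjective⟩
  refine ⟨e.symm.toRingHom.comp (g.codRestrict f.range fun a => h ⟨a, rfl⟩), ?_⟩
  ext a
  exact congrArg Subtype.val (e.apply_symm_apply _)

theorem finiteDimensional_fieldRange_of_comp_eq {K k R : Type*} [Field K] [Field k] [Ring R]
    [Algebra K R] [Module.Finite K R] (f : k →+* R) (hf : Function.Injective f) (σ : K →+* k)
    (hσ : f.comp σ = algebraMap K R) : FiniteDimensional σ.fieldRange k := by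
  let _ := σ.toAlgebra
  let fK : k →ₗ[K] R :=
    { toFun := f
      map_add' := map_add f
      map_smul' := fun c x => by
        rw [Algebra.smul_def, map_mul, RingHom.algebraMap_toAlgebra, ← RingHom.comp_apply, hσ,
          RingHom.id_apply, ← Algebra.smul_def] }
  have : Module.Finite K k := Module.Finite.of_injective fK hf
  let idσ : k →ₛₗ[σ.rangeRestrictField] k :=
    { toFun := id
      map_add' := fun _ _ => rfl
      map_smul' := fun _ _ => rfl }
  exact Module.Finite.of_surjective idσ Function.surjective_id

theorem IsCentrallyFiniteMatrixMinimalExt.exists_subfield {k : Type} [Field k] {n : ℕ}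
    {D : Type} [DivisionRing D] (h : IsCentrallyFiniteMatrixMinimalExt k n D) :
    ∃ F : Subfield k, F ≠ ⊤ ∧ FiniteDimensional F k := by
  obtain ⟨hn, hfin, f, hf, hmax⟩ := h
  have hR : ∃ x y : Matrix (Fin n) (Fin n) D, ¬Commute x y :=
    ⟨_, _, Matrix.not_commute_single_single (α := D) (i := ⟨0, by omega⟩) (j := ⟨1, hn⟩)
      (by simp [Fin.ext_iff])⟩
  have hcenter := hmax.center_le hR (by
    rintro _ ⟨a, rfl⟩ _ ⟨b, rfl⟩
    rw [← map_mul, mul_comm, map_mul])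
  obtain ⟨σ, hσ⟩ := f.exists_comp_eq_of_range_le hf (algebraMap (Subring.center D) _) (by
    rintro _ ⟨z, rfl⟩
    exact hcenter (Subring.mem_center_iff.mpr fun M => (Algebra.commutes z M).symm))
  refine ⟨σ.fieldRange, fun htop => hmax.not_le_center hR ?_,
    finiteDimensional_fieldRange_of_comp_eq f hf σ hσ⟩
  rintro _ ⟨a, rfl⟩
  obtain ⟨z, rfl⟩ : a ∈ σ.fieldRange := htop ▸ Subfield.mem_top a
  rw [← RingHom.comp_apply, hσ]
  exact Subring.mem_center_iff.mpr fun M => (Algebra.commutes z M).symm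

section LeftMultiplication

variable {K L : Type*} [Field K] [Field L] [Algebra K L]

def commutantField (T : Subring (Module.End K L)) : IntermediateField K L where
  carrier := {c | ∀ t ∈ T, ∀ x, t (c * x) = c * t x}
  mul_mem' {a b} ha hb t ht x := by rw [mul_assoc, ha t ht, hb t ht, mul_assoc]
  add_mem' {a b} ha hb t ht x := by rw [add_mul, map_add, ha t ht, hb t ht, add_mul]
  algebraMap_mem' c t _ x := by rw [← Algebra.smul_def, ← Algebra.smul_def, map_smul]
  inv_mem' a ha t ht x := by
    rcases eq_or_ne a 0 with rfl | h0
    · simp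
    · rw [eq_inv_mul_iff_mul_eq₀ h0, ← ha t ht, mul_inv_cancel_left₀ h0]

variable {T : Subring (Module.End K L)}

theorem mem_commutantField {c : L} :
    c ∈ commutantField T ↔ ∀ t ∈ T, ∀ x, t (c * x) = c * t x := Iff.rfl

theorem le_range_lmul_of_commutantField_eq_top (hT : commutantField T = ⊤) :
    T ≤ (Algebra.lmul K L).toRingHom.range := by
  intro t ht
  refine ⟨t 1, LinearMap.ext fun x => ?_⟩
  have := mem_commutantField.mp (hT ▸ IntermediateField.mem_top (x := x)) t ht 1
  rw [mul_one] at this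
  rw [this, mul_comm]
  rfl

theorem isSimpleModule_of_range_lmul_le (hT : (Algebra.lmul K L).toRingHom.range ≤ T) :
    IsSimpleModule T L := by
  refine isSimpleModule_iff_toSpanSingleton_surjective.mpr ⟨inferInstance, fun x hx y => ?_⟩
  refine ⟨⟨Algebra.lmul K L (y * x⁻¹), hT ⟨_, rfl⟩⟩, ?_⟩
  show y * x⁻¹ * x = y
  rw [inv_mul_cancel_right₀ hx]

theorem exists_eq_smul_of_commutantField_eq_bot (hT : (Algebra.lmul K L).toRingHom.range ≤ T)
    (hbot : commutantField T = ⊥) (g : Module.End T L) : ∃ c : K, ∀ x, g x = c • x := by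
  have hg : ∀ x, g x = x * g 1 := fun x => by
    have : g (x * 1) = x * g 1 := g.map_smul ⟨Algebra.lmul K L x, hT ⟨x, rfl⟩⟩ 1
    rwa [mul_one] at this
  have : g 1 ∈ commutantField T := fun t ht x => by
    rw [mul_comm, ← hg, mul_comm, ← hg]
    exact (g.map_smul ⟨t, ht⟩ x).symm
  obtain ⟨c, hc⟩ := IntermediateField.mem_bot.mp (hbot ▸ this)
  exact ⟨c, fun x => by rw [hg, ← hc, Algebra.smul_def, mul_comm]⟩

theorem finite_moduleEnd_subring [FiniteDimensional K L] : Module.Finite (Module.End T L) L :=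
  Module.Finite.of_surjective (σ := Module.toModuleEnd T (S := K) L)
    { toFun := id, map_add' := fun _ _ => rfl, map_smul' := fun _ _ => rfl }
    Function.surjective_id

theorem eq_top_of_commutantField_eq_bot [FiniteDimensional K L]
    (hT : (Algebra.lmul K L).toRingHom.range ≤ T) (hbot : commutantField T = ⊥) : T = ⊤ := by
  have := isSimpleModule_of_range_lmul_le hT
  have := finite_moduleEnd_subring (T := T)
  refine eq_top_iff.mpr fun φ _ => ?_
  let φ' : Module.End (Module.End T L) L :=
    { toFun := φ
      map_add' := map_add φ
      map_smul' := fun g x => by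
        obtain ⟨c, hc⟩ := exists_eq_smul_of_commutantField_eq_bot hT hbot g
        simp only [Module.End.smul_def, hc, map_smul, RingHom.id_apply] }
  obtain ⟨t, ht⟩ := Module.Finite.toModuleEnd_moduleEnd_surjective (R := T) (M := L) φ'
  have : (t : Module.End K L) = φ := LinearMap.ext fun x => LinearMap.congr_fun ht x
  exact this ▸ t.2

theorem range_lmul_ne_top (h : (⊥ : IntermediateField K L) ≠ ⊤) :
    (Algebra.lmul K L).toRingHom.range ≠ ⊤ := by
  obtain ⟨x, hx⟩ : ∃ x : L, x ∉ Submodule.span K {1} := by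
    by_contra! hall
    refine h (eq_top_iff.mpr fun x _ => ?_)
    obtain ⟨c, hc⟩ := Submodule.mem_span_singleton.mp (hall x)
    exact hc ▸ IntermediateField.mem_bot.mpr ⟨c, (Algebra.algebraMap_eq_smul_one c)⟩
  obtain ⟨f, hfx, hf_span⟩ := Submodule.exists_dual_map_eq_bot_of_notMem hx inferInstance
  have hf1 : f 1 = 0 :=
    (Submodule.mem_bot K).mp
      (hf_span ▸ Submodule.mem_map_of_mem (Submodule.mem_span_singleton_self 1))
  -- `v ↦ f v • 1` vanishes at `1` but not at `x`, so it is not a multiplication map.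
  intro htop
  obtain ⟨a, ha⟩ : f.smulRight (1 : L) ∈ (Algebra.lmul K L).toRingHom.range :=
    htop ▸ Subring.mem_top _
  have ha0 : a = 0 := by simpa [hf1] using LinearMap.congr_fun ha 1
  simpa [ha0, hfx, eq_comm (a := (0 : L))] using LinearMap.congr_fun ha x

theorem isMaximalSubring_range_lmul [FiniteDimensional K L]
    [IsSimpleOrder (IntermediateField K L)] :
    IsMaximalSubring (Algebra.lmul K L).toRingHom.range := by
  refine ⟨range_lmul_ne_top bot_ne_top, fun T hT => ?_⟩
  rcases eq_bot_or_eq_top (commutantField T) with hbot | htop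
  · exact Or.inr (eq_top_of_commutantField_eq_bot hT hbot)
  · exact Or.inl (le_antisymm (le_range_lmul_of_commutantField_eq_top htop) hT)

end LeftMultiplication

theorem finiteDimensional_center_of_field (K : Type*) [Field K] :
    FiniteDimensional (Subring.center K) K :=
  Module.Finite.of_surjective (Algebra.linearMap (Subring.center K) K)
    fun x => ⟨⟨x, Subring.center_eq_top K ▸ Subring.mem_top x⟩, rfl⟩

theorem isCentrallyFiniteMatrixMinimalExt_of_isSimpleOrder {K k : Type} [Field K] [Field k]
    [Algebra K k] [FiniteDimensional K k] [IsSimpleOrder (IntermediateField K k)] :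
    IsCentrallyFiniteMatrixMinimalExt k (Module.finrank K k) K := by
  have hrank : 1 < Module.finrank K k := by
    have : Module.finrank K k ≠ 1 := fun h =>
      bot_ne_top (IntermediateField.bot_eq_top_iff_finrank_eq_one.mpr h)
    have := Module.finrank_pos (R := K) (M := k)
    omega
  let e := (algEquivMatrix (Module.finBasis K k)).toRingEquiv
  refine ⟨hrank, finiteDimensional_center_of_field K,
    (e : Module.End K k →+* _).comp (Algebra.lmul K k).toRingHom,
    e.injective.comp (Algebra.lmul_injective (R := K)), ?_⟩
  rw [← RingHom.map_range]
  exact isMaximalSubring_range_lmul.map e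

theorem IntermediateField.exists_isCoatom {F k : Type*} [Field F] [Field k] [Algebra F k]
    [FiniteDimensional F k] (h : (⊥ : IntermediateField F k) ≠ ⊤) :
    ∃ E : IntermediateField F k, IsCoatom E := by
  have : WellFoundedGT (IntermediateField F k) :=
    StrictMono.wellFoundedGT (f := fun E => Subalgebra.toSubmodule E.toSubalgebra)
      fun _ _ h => Subalgebra.toSubmodule.strictMono (IntermediateField.toSubalgebra_strictMono h)
  have : IsCoatomic (IntermediateField F k) := isCoatomic_of_orderTop_gt_wellFounded wellFounded_gt
  obtain ⟨E, hE, -⟩ := (eq_top_or_exists_le_coatom ⊥).resolve_left h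
  exact ⟨E, hE⟩

theorem IntermediateField.isSimpleOrder_of_isCoatom {F k : Type*} [Field F] [Field k]
    [Algebra F k] {E : IntermediateField F k} (hE : IsCoatom E) :
    IsSimpleOrder (IntermediateField E k) := by
  have := Set.isSimpleOrder_Ici_iff_isCoatom.mpr hE
  let e : Set.Ici E ≃o IntermediateField E k := IntermediateField.extendScalars.orderIso E
  exact e.symm.isSimpleOrder

theorem exists_isCentrallyFiniteMatrixMinimalExt_of_subfield {k : Type} [Field k]
    (F : Subfield k) (hF : F ≠ ⊤) [FiniteDimensional F k] :
    ∃ (n : ℕ) (D : Type) (inst : DivisionRing D),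
      @IsCentrallyFiniteMatrixMinimalExt k _ n D inst := by
  have hbot : (⊥ : IntermediateField F k) ≠ ⊤ := fun h => hF <| eq_top_iff.mpr fun x _ => by
    obtain ⟨c, rfl⟩ := IntermediateField.mem_bot.mp (h ▸ IntermediateField.mem_top (x := x))
    exact c.2
  obtain ⟨E, hE⟩ := IntermediateField.exists_isCoatom hbot
  have := IntermediateField.isSimpleOrder_of_isCoatom hE
  exact ⟨_, E, inferInstance, isCentrallyFiniteMatrixMinimalExt_of_isSimpleOrder⟩

/-- A field `k` has a minimal ring extension of the form `Mₙ(D)`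
with `n > 1` and `D` a centrally finite division ring if and only if `k` has a proper
subfield `F` over which `k` is finite-dimensional. -/
theorem stmt19 (k : Type) [Field k] :
    (∃ (n : ℕ) (D : Type) (inst : DivisionRing D),
      @IsCentrallyFiniteMatrixMinimalExt k _ n D inst) ↔
    (∃ F : Subfield k, F ≠ ⊤ ∧ FiniteDimensional F k) := by
  constructor
  · rintro ⟨n, D, _, h⟩
    exact h.exists_subfield
  · rintro ⟨F, hF, _⟩
    exact exists_isCentrallyFiniteMatrixMinimalExt_of_subfield F hF
end
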